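/- arXiv:1403.4121 — 7 statements merged into one kernel-verified Lean document; each statement's English description precedes it below -/
import Mathlib

section
/- There exists ε ∈ k[[t]] of the form ε = t^{c₀/p}·u with u a unit of k[[t]], such that h(t) − t·ẽxp(ε^p) ∈ t^{1+p·c₀}·k[[t]]. (Proposition 2.1(a).) -/
/-! Since `k` is perfect and `w = Σ αᵢ t^(c₀+pi)` only has exponents in `c₀ + pℕ`, it is a
`p`-th power: `w = β^p` with `β = t^(c₀/p) B` and `B = Σ αᵢ^(1/p) tⁱ` a unit.
The truncated logarithm `L(X) = Σ_{j<p-1} (-1)^j X^(j+1)/(j+1)` has coefficients in `𝔽_p`,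
so `L(β)^p = L(w)`, and `ε = L(β) = β(1 + O(β))` has the required shape.
Over a field of characteristic `p`, `F = ẽxp ∘ L` and `1 + X` both satisfy `(1 + X) F' ≡ F`
modulo `X^(p-1)` and agree at `0`, which forces `ẽxp(L(X)) ≡ 1 + X mod X^p`. Substituting `w`
gives `ẽxp(ε^p) ≡ 1 + w mod w^p`, and `t^(pc₀) ∣ w^p`. -/

open Polynomial Finset
open scoped Nat

noncomputable def truncExp (K : Type*) [Field K] (n : ℕ) : K[X] :=
  ∑ i ∈ range n, C (i ! : K)⁻¹ * X ^ i

noncomputable def truncLog (K : Type*) [Field K] (n : ℕ) : K[X] :=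
  ∑ j ∈ range n, C ((-1) ^ j / (j + 1 : K)) * X ^ (j + 1)

section

variable {K : Type*} [Field K]

lemma X_dvd_truncLog (n : ℕ) : X ∣ truncLog K n :=
  dvd_sum fun j _ => (dvd_pow_self X j.succ_ne_zero).mul_left _

lemma X_sq_dvd_truncLog_sub_X {n : ℕ} (hn : 0 < n) : X ^ 2 ∣ truncLog K n - X := by
  obtain ⟨n, rfl⟩ := Nat.exists_eq_succ_of_ne_zero hn.ne'
  rw [truncLog, sum_range_succ']
  simp only [pow_zero, Nat.cast_zero, zero_add, div_one, map_one, one_mul, pow_one,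
    add_sub_cancel_right]
  exact dvd_sum fun j _ => (pow_dvd_pow X (by omega : 2 ≤ j + 1 + 1)).mul_left _

lemma aeval_truncExp {A : Type*} [Semiring A] [Algebra K A] (a : A) (n : ℕ) :
    aeval a (truncExp K n) = ∑ i ∈ range n, (i ! : K)⁻¹ • a ^ i := by
  simp [truncExp, Algebra.smul_def]

end

section CharP

variable {K : Type*} [Field K] {p : ℕ} [CharP K p]

lemma natCast_succ_ne_zero_of_lt {j : ℕ} (hj : j + 1 < p) : (j + 1 : K) ≠ 0 := by
  exact_mod_cast mt (CharP.cast_eq_zero_iff K p (j + 1)).mp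
    (Nat.not_dvd_of_pos_of_lt j.succ_pos hj)

lemma derivative_truncExp_succ {n : ℕ} (hn : n < p) :
    derivative (truncExp K (n + 1)) = truncExp K n := by
  rw [truncExp, sum_range_succ', derivative_add, derivative_sum, truncExp]
  simp only [pow_zero, mul_one, derivative_C, add_zero, derivative_C_mul, derivative_X_pow]
  refine sum_congr rfl fun i hi => ?_
  have hi' := natCast_succ_ne_zero_of_lt (K := K) (p := p) (j := i) (by rw [mem_range] at hi; omega)
  rw [Nat.add_sub_cancel, ← mul_assoc, C_eq_natCast, ← map_natCast C, ← C_mul,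
    Nat.factorial_succ]
  congr 2
  push_cast
  field_simp

lemma derivative_truncLog {n : ℕ} (hn : n < p) :
    derivative (truncLog K n) = ∑ j ∈ range n, (-X) ^ j := by
  rw [truncLog, derivative_sum]
  refine sum_congr rfl fun j hj => ?_
  have hj' := natCast_succ_ne_zero_of_lt (K := K) (p := p) (j := j) (by rw [mem_range] at hj; omega)
  rw [derivative_C_mul, derivative_X_pow, Nat.add_sub_cancel, ← mul_assoc, C_eq_natCast,
    ← map_natCast C, ← C_mul]
  push_cast
  rw [div_mul_cancel₀ _ hj', neg_pow (X : K[X])]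
  simp

lemma one_add_X_mul_derivative_truncLog [Fact p.Prime] :
    (1 + X) * derivative (truncLog K (p - 1)) = 1 - X ^ (p - 1) := by
  have hp := (Fact.out : p.Prime).one_lt
  have hneg : (-1 : K[X]) ^ (p - 1) = 1 := by
    have h : (-1 : K[X]) ^ (p - 1) * -1 = -1 := by
      rw [← pow_succ, Nat.sub_add_cancel hp.le, neg_one_pow_char]
    simpa using h
  have h := mul_neg_geom_sum (-X : K[X]) (p - 1)
  rwa [sub_neg_eq_add, neg_pow (X : K[X]), hneg, one_mul, ← derivative_truncLog (by omega)] at h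

lemma X_pow_succ_dvd_of_dvd_one_add_X_mul_derivative_sub {D : K[X]} {n : ℕ} (hn : n < p)
    (h0 : D.coeff 0 = 0) (hD : X ^ n ∣ (1 + X) * derivative D - D) : X ^ (n + 1) ∣ D := by
  have hcoeff (m : ℕ) : ((1 + X) * derivative D - D).coeff m
      = D.coeff (m + 1) * (m + 1) + D.coeff m * m - D.coeff m := by
    cases m <;> simp [add_mul, coeff_derivative, coeff_X_mul]
  rw [X_pow_dvd_iff] at hD ⊢
  intro d hd
  induction d with
  | zero => exact h0
  | succ m ih =>
    have hm := hD m (by omega)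
    rw [hcoeff, ih (by omega), zero_mul, add_zero, sub_zero] at hm
    exact (mul_eq_zero.mp hm).resolve_right (natCast_succ_ne_zero_of_lt (p := p) (by omega))

theorem X_pow_dvd_truncExp_comp_truncLog_sub [Fact p.Prime] :
    X ^ p ∣ (truncExp K p).comp (truncLog K (p - 1)) - (1 + X) := by
  obtain ⟨n, rfl⟩ := Nat.exists_eq_succ_of_ne_zero (Fact.out : p.Prime).ne_zero
  have hL' := one_add_X_mul_derivative_truncLog (K := K) (p := n + 1)
  rw [Nat.succ_sub_one] at hL' ⊢
  set L := truncLog K n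
  have hE : truncExp K (n + 1) = truncExp K n + C (n ! : K)⁻¹ * X ^ n := sum_range_succ _ _
  have hF' : derivative ((truncExp K (n + 1)).comp L) = derivative L * (truncExp K n).comp L := by
    rw [derivative_comp, derivative_truncExp_succ (p := n + 1) n.lt_succ_self]
  have hL0 : L.eval 0 = 0 := by
    rw [← coeff_zero_eq_eval_zero, ← X_dvd_iff]; exact X_dvd_truncLog n
  apply X_pow_succ_dvd_of_dvd_one_add_X_mul_derivative_sub (p := n + 1) n.lt_succ_self
  · rw [coeff_zero_eq_eval_zero, eval_sub, eval_comp, hL0]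
    simp [truncExp, eval_finsetSum, sum_range_succ']
  · have h : (1 + X) * derivative ((truncExp K (n + 1)).comp L - (1 + X))
        - ((truncExp K (n + 1)).comp L - (1 + X))
        = -(X ^ n * (truncExp K n).comp L + C (n ! : K)⁻¹ * L ^ n) := by
      rw [derivative_sub, hF', hE, add_comp]
      simp only [derivative_add, derivative_one, derivative_X, mul_comp, C_comp, X_pow_comp]
      linear_combination (truncExp K n).comp L * hL'
    rw [h, dvd_neg]
    exact dvd_add (dvd_mul_right _ _) ((pow_dvd_pow_of_dvd (X_dvd_truncLog n) n).mul_left _)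

lemma map_frobenius_truncLog [Fact p.Prime] (n : ℕ) :
    (truncLog K n).map (frobenius K p) = truncLog K n := by
  simp [truncLog, Polynomial.map_sum]

lemma aeval_pow_char_of_map_frobenius_eq [Fact p.Prime] {A : Type*} [CommSemiring A]
    [Algebra K A] {P : K[X]} (hP : P.map (frobenius K p) = P) (a : A) :
    aeval a P ^ p = aeval (a ^ p) P := by
  rw [← map_pow, ← map_frobenius_expand, map_expand, hP, expand_aeval]

lemma pow_char_dvd_one_add_sub_aeval_truncExp_comp_truncLog [Fact p.Prime] {A : Type*}
    [CommRing A] [Algebra K A] (a : A) :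
    a ^ p ∣ 1 + a - aeval a ((truncExp K p).comp (truncLog K (p - 1))) := by
  have h := map_dvd (aeval a) (X_pow_dvd_truncExp_comp_truncLog_sub (K := K) (p := p))
  rw [map_pow, aeval_X, map_sub, map_add, map_one, aeval_X] at h
  exact dvd_sub_comm.mp h

end CharP

namespace PowerSeries

lemma map_frobenius_expand {R : Type*} [CommRing R] (p : ℕ) [ExpChar R p] (f : PowerSeries R) :
    map (frobenius R p) (expand p (expChar_ne_zero R p) f) = f ^ p :=
  MvPowerSeries.map_frobenius_expand p _

lemma expand_eq_map_frobeniusEquiv_symm_pow {R : Type*} [CommRing R] (p : ℕ) [ExpChar R p]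
    [PerfectRing R p] (f : PowerSeries R) :
    expand p (expChar_ne_zero R p) f = map ((frobeniusEquiv R p).symm : R →+* R) f ^ p := by
  rw [← map_frobenius_expand, map_expand, ← RingHom.comp_apply, ← map_comp]
  simp

lemma exists_aeval_X_pow_mul_eq_X_pow_mul_unit {R : Type*} [CommRing R] {Q : R[X]}
    (hQ : Polynomial.X ^ 2 ∣ Q - Polynomial.X) {m : ℕ} (hm : 0 < m) (u : (PowerSeries R)ˣ) :
    ∃ v : (PowerSeries R)ˣ,
      Polynomial.aeval (X ^ m * (u : PowerSeries R)) Q = X ^ m * (v : PowerSeries R) := by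
  obtain ⟨S, hS⟩ := hQ
  set β := X ^ m * (u : PowerSeries R)
  have h : Polynomial.aeval β Q =
      X ^ m * ((u : PowerSeries R) * (1 + β * Polynomial.aeval β S)) := by
    rw [eq_add_of_sub_eq hS]
    simp only [map_add, map_mul, map_pow, aeval_X, β]
    ring
  refine ⟨(u.isUnit.mul ?_).unit, h⟩
  rw [isUnit_iff_constantCoeff]
  simp [β, zero_pow hm.ne']

lemma mk_eq_X_pow_mul_expand {R : Type*} [CommRing R] {p : ℕ} (hp : p ≠ 0) (c : ℕ)
    (a : ℕ → R) :
    mk (fun n => if c ≤ n ∧ p ∣ n - c then a ((n - c) / p) else 0) =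
      X ^ c * expand p hp (mk a) := by
  ext n
  simp only [coeff_mk, coeff_X_pow_mul', coeff_expand]
  split_ifs <;> tauto

end PowerSeries

theorem stmt_1_general (p : ℕ) [Fact p.Prime]
    (k : Type*) [Field k] [Finite k] [CharP k p]
    (c₀ : ℕ) (hc₀ : 0 < c₀) (hpc₀ : p ∣ c₀)
    (α : ℕ → k) (hα : α 0 ≠ 0) :
    ∃ (ε : PowerSeries k) (u : (PowerSeries k)ˣ),
      ε = PowerSeries.X ^ (c₀ / p) * (u : PowerSeries k) ∧
      PowerSeries.X * (1 + PowerSeries.mk fun n =>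
            if c₀ ≤ n ∧ p ∣ n - c₀ then α ((n - c₀) / p) else 0) -
        PowerSeries.X * (∑ i ∈ Finset.range p, (Nat.factorial i : k)⁻¹ • (ε ^ p) ^ i)
          ∈ Ideal.span {(PowerSeries.X : PowerSeries k) ^ (1 + p * c₀)} := by
  have hp1 := (Fact.out : p.Prime).one_lt
  set B := PowerSeries.map ((frobeniusEquiv k p).symm : k →+* k) (PowerSeries.mk α)
  have hB : IsUnit B := by
    rw [PowerSeries.isUnit_iff_constantCoeff]
    simpa [B, ← PowerSeries.coeff_zero_eq_constantCoeff_apply] using hα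
  set w : PowerSeries k := PowerSeries.mk fun n =>
    if c₀ ≤ n ∧ p ∣ n - c₀ then α ((n - c₀) / p) else 0 with hw_def
  have hw : w = PowerSeries.X ^ c₀ * B ^ p := by
    rw [hw_def, PowerSeries.mk_eq_X_pow_mul_expand (expChar_ne_zero k p),
      PowerSeries.expand_eq_map_frobeniusEquiv_symm_pow]
  have hXw : PowerSeries.X ^ (p * c₀) ∣ w ^ p := by
    rw [mul_comm, pow_mul]
    exact pow_dvd_pow_of_dvd (hw ▸ dvd_mul_right _ _) p
  obtain ⟨v, hv⟩ := PowerSeries.exists_aeval_X_pow_mul_eq_X_pow_mul_unit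
    (X_sq_dvd_truncLog_sub_X (K := k) (n := p - 1) (by omega))
    (Nat.div_pos (Nat.le_of_dvd hc₀ hpc₀) (by omega)) hB.unit
  refine ⟨_, v, hv, ?_⟩
  rw [IsUnit.unit_spec, aeval_pow_char_of_map_frobenius_eq (map_frobenius_truncLog _), mul_pow,
    ← pow_mul, Nat.div_mul_cancel hpc₀, ← hw, ← aeval_truncExp, ← aeval_comp,
    Ideal.mem_span_singleton, pow_add, pow_one, ← mul_sub]
  exact mul_dvd_mul_left _ (hXw.trans (pow_char_dvd_one_add_sub_aeval_truncExp_comp_truncLog w))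

/-- **Proposition 2.1 (a).** Let `k` be a finite field of characteristic `p > 2`, `c₀ ∈ pℕ`,
and `h` the automorphism of `k[[t]]` with `h(t) = t(1 + Σ_{i≥0} α_i t^{c₀+pi})`, `α₀ ≠ 0`.
There is `ε ∈ t^{c₀/p}·k[[t]]ˣ` such that `h(t) ≡ t·ẽxp(ε^p) mod t^{1+pc₀}`, where
`ẽxp(X) = Σ_{0≤i<p} X^i/i!` is the truncated exponential. -/
theorem stmt_1 (p : ℕ) [Fact p.Prime] (hp : 2 < p)
    (k : Type*) [Field k] [Finite k] [CharP k p]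
    (c₀ : ℕ) (hc₀ : 0 < c₀) (hpc₀ : p ∣ c₀)
    (α : ℕ → k) (hα : α 0 ≠ 0) :
    ∃ (ε : PowerSeries k) (u : (PowerSeries k)ˣ),
      ε = PowerSeries.X ^ (c₀ / p) * (u : PowerSeries k) ∧
      PowerSeries.X * (1 + PowerSeries.mk fun n =>
            if c₀ ≤ n ∧ p ∣ n - c₀ then α ((n - c₀) / p) else 0) -
        PowerSeries.X * (∑ i ∈ Finset.range p, (Nat.factorial i : k)⁻¹ • (ε ^ p) ^ i)
          ∈ Ideal.span {(PowerSeries.X : PowerSeries k) ^ (1 + p * c₀)} :=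
  stmt_1_general p k c₀ hc₀ hpc₀ α hα
end

section
/- For every b ∈ V((t)) there exist r, s ∈ V((t)) such that b = r + σ(s) − s, the support of r is contained in {0} ∪ {−a : a a positive integer prime to p}, and the constant coefficient r₀ of r lies in α₀·V^{φ=id}, i.e. r₀ = α₀·v for some v ∈ V with φ(v) = v. (Lemma 2.2.) -/
/-!
Put `r = b + s - σ s`, so that `r_n = b_n + s_n - [p ∣ n] φ(s_{n/p})`. For `n > 0` the equation
`r_n = 0` determines `s_n` recursively from `s_{n/p}`. For `n < 0` divisible by `p` it is solved by
`s_n = Σ_{j ≥ 1} φ^{-j} b_{p^j n}`, a finite sum because `b` has support bounded below. At `n = 0`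
one needs `b_0 = α₀ v + φ u - u` with `φ v = v`: take `v = Σ_{i < N₀} φ^i b_0`; then `b_0 - α₀ v`
has trace zero, because `Σ_i α₀^{p^i} = Tr(α₀) = 1`, and is of the form `φ u - u` by additive
Hilbert 90.
-/

open Finset Function

theorem FiniteField.sum_range_pow_eq_algebraMap_trace {K L : Type*} [Field K] [Fintype K]
    [Field L] [Fintype L] [Algebra K L] {N : ℕ} (hcard : Fintype.card L = Fintype.card K ^ N)
    (x : L) : ∑ i ∈ range N, x ^ Fintype.card K ^ i = algebraMap K L (Algebra.trace K L x) := by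
  have hN : Module.finrank K L = N := by
    refine Nat.pow_right_injective (Fintype.one_lt_card (α := K)) ?_
    simp only [← hcard, Module.card_eq_pow_finrank (K := K) (V := L)]
  rw [FiniteField.algebraMap_trace_eq_sum_pow, hN, Nat.card_eq_fintype_card]

section Semilinear

variable {p N : ℕ} {k V : Type*} [Field k] [AddCommGroup V] [Module k V] {φ : V →+ V}

theorem iterate_map_smul_of_semilinear (hφ : ∀ (c : k) (v : V), φ (c • v) = c ^ p • φ v)
    (i : ℕ) (c : k) (x : V) : φ^[i] (c • x) = c ^ p ^ i • φ^[i] x := by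
  induction i with
  | zero => simp
  | succ i ih => rw [iterate_succ_apply', ih, hφ, iterate_succ_apply', ← pow_mul, ← pow_succ]

omit [Module k V] in
theorem map_sum_range_iterate (hN : φ^[N] = id) (w : V) :
    φ (∑ i ∈ range N, φ^[i] w) = ∑ i ∈ range N, φ^[i] w := by
  rw [← sub_eq_zero, map_sum, ← sum_sub_distrib]
  simp only [← iterate_succ_apply' φ]
  rw [sum_range_sub (φ^[·] w), hN, iterate_zero, sub_self]

/-- Additive Hilbert 90. -/
theorem exists_map_sub_eq_of_sum_iterate_eq_zero [ExpChar k p]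
    (hφ : ∀ (c : k) (v : V), φ (c • v) = c ^ p • φ v) (hN : φ^[N] = id)
    {α : k} (hα : ∑ i ∈ range N, α ^ p ^ i = 1) {y : V} (hy : ∑ i ∈ range N, φ^[i] y = 0) :
    ∃ u : V, φ u - u = y := by
  set β : ℕ → k := fun i ↦ ∑ j ∈ range i, α ^ p ^ j
  have hβ : ∀ i, β i ^ p = β (i + 1) - α := fun i ↦ by
    simp only [β, sum_pow_char, ← pow_mul, ← pow_succ, sum_range_succ', pow_zero, pow_one]
    abel
  have hφy : ∑ i ∈ range N, φ^[i + 1] y = 0 := by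
    simpa only [iterate_succ_apply', ← map_sum, hy] using map_zero φ
  refine ⟨∑ i ∈ range N, β i • φ^[i] y, ?_⟩
  simp only [map_sum, hφ, hβ, sub_smul, ← iterate_succ_apply' φ, sum_sub_distrib, ← smul_sum,
    hφy, smul_zero, sub_zero]
  rw [← sum_sub_distrib, sum_range_sub (fun i ↦ β i • φ^[i] y)]
  simp [β, hα, hN]

theorem exists_fixed_smul_add_map_sub [ExpChar k p]
    (hφ : ∀ (c : k) (v : V), φ (c • v) = c ^ p • φ v) (hN : φ^[N] = id)
    {α : k} (hα : ∑ i ∈ range N, α ^ p ^ i = 1) (w : V) :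
    ∃ v u : V, φ v = v ∧ w = α • v + (φ u - u) := by
  set v := ∑ i ∈ range N, φ^[i] w
  have hv : φ v = v := map_sum_range_iterate hN w
  obtain ⟨u, hu⟩ : ∃ u, φ u - u = w - α • v := by
    refine exists_map_sub_eq_of_sum_iterate_eq_zero hφ hN hα ?_
    have hvi : ∀ i, φ^[i] v = v := fun i ↦ iterate_fixed hv i
    simp only [iterate_map_sub, iterate_map_smul_of_semilinear hφ, hvi, sum_sub_distrib,
      ← sum_smul, hα, one_smul, sub_self, v]
  exact ⟨v, u, hv, by rw [hu, add_sub_cancel]⟩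

end Semilinear

section Coefficients

variable {V : Type*} [AddCommGroup V]

-- Solves `c n + s n = φ (s (n / p))` for `n > 0`, descending along `n, n / p, n / p², …`.
noncomputable def posCoeff {p : ℕ} (hp : 1 < p) (φ : V →+ V) (c : ℤ → V) (n : ℤ) : V :=
  if 0 < n then (if (p : ℤ) ∣ n then φ (posCoeff hp φ c (n / p)) else 0) - c n else 0
termination_by n.toNat
decreasing_by
  have : n / p < n := Int.ediv_lt_self_of_pos_of_ne_one (by assumption) (by omega)
  omega

theorem posCoeff_of_pos {p : ℕ} (hp : 1 < p) (φ : V →+ V) (c : ℤ → V) {n : ℤ} (hn : 0 < n) :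
    posCoeff hp φ c n = (if (p : ℤ) ∣ n then φ (posCoeff hp φ c (n / p)) else 0) - c n := by
  rw [posCoeff, if_pos hn]

variable (q : ℤ) (ψ : V →+ V) (c : ℤ → V) (M : ℕ)

/- Solves `c (q m) + s (q m) = φ (s m)` for `m < 0` ascending along `m, q m, q² m, …`, with `ψ` a
right inverse of `φ`; truncating the sum at `M` is harmless once `c (q ^ M * (q m)) = 0`. -/
def negCoeff (n : ℤ) : V :=
  ∑ j ∈ range M, ψ^[j + 1] (c (q ^ (j + 1) * n))

theorem map_negCoeff {φ : V →+ V} (hφψ : ∀ x, φ (ψ x) = x) {m : ℤ}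
    (hc : c (q ^ M * (q * m)) = 0) :
    φ (negCoeff q ψ c M m) = c (q * m) + negCoeff q ψ c M (q * m) := by
  have hsum := sum_range_succ (fun j ↦ ψ^[j] (c (q ^ j * (q * m)))) M
  rw [hc, iterate_map_zero, add_zero, sum_range_succ'] at hsum
  simp only [negCoeff, map_sum, iterate_succ_apply', hφψ, ← hsum, pow_succ, mul_assoc]
  simp [add_comm]

theorem negCoeff_eq_zero {N n : ℤ} (hq : 0 < q) (hn : n < min N 0) (hc : ∀ m < N, c m = 0) :
    negCoeff q ψ c M n = 0 := by
  refine sum_eq_zero fun j _ ↦ ?_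
  have : q ^ (j + 1) * n ≤ n := by
    have := one_le_pow₀ (M₀ := ℤ) (n := j + 1) (by omega : (1 : ℤ) ≤ q)
    nlinarith [min_le_right N 0]
  rw [hc _ (by omega), iterate_map_zero]

end Coefficients

theorem pow_natAbs_mul_lt {p : ℕ} (hp : 1 < p) (N : ℤ) {n : ℤ} (hn : n < 0) :
    (p : ℤ) ^ N.natAbs * n < N := by
  have : (N.natAbs : ℤ) < (p : ℤ) ^ N.natAbs := by exact_mod_cast Nat.lt_pow_self hp
  have : -(N.natAbs : ℤ) ≤ N := by omega
  nlinarith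

theorem LaurentSeries.exists_coeff_add_eq {V : Type*} [AddCommGroup V] {p : ℕ} (hp : 1 < p)
    {φ : V →+ V} (hφ : Bijective φ) (b : LaurentSeries V) (u : V) :
    ∃ s : LaurentSeries V, s.coeff 0 = u ∧ ∀ n : ℤ, n ≠ 0 → (0 < n ∨ (p : ℤ) ∣ n) →
      b.coeff n + s.coeff n = if (p : ℤ) ∣ n then φ (s.coeff (n / p)) else 0 := by
  set ψ : V →+ V := (AddEquiv.ofBijective φ hφ).symm.toAddMonoidHom
  have hφψ : ∀ x, φ (ψ x) = x := (AddEquiv.ofBijective φ hφ).apply_symm_apply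
  have hb : ∀ m < b.order, b.coeff m = 0 := fun m ↦ HahnSeries.coeff_eq_zero_of_lt_order
  set M := b.order.natAbs
  set f : ℤ → V := fun n ↦
    if n < 0 then negCoeff p ψ b.coeff M n else if n = 0 then u else posCoeff hp φ b.coeff n
  have hf_neg : ∀ n < 0, f n = negCoeff p ψ b.coeff M n := fun n hn ↦ if_pos hn
  have hf_pos : ∀ n > 0, f n = posCoeff hp φ b.coeff n := fun n hn ↦ by
    simp only [f, if_neg (not_lt.mpr hn.le), if_neg hn.ne']
  have hf : BddBelow (support f) := ⟨min b.order 0, fun n hn ↦ not_lt.mp fun h ↦ hn <| by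
    rw [hf_neg n (h.trans_le (min_le_right _ _)), negCoeff_eq_zero p ψ b.coeff M (by omega) h hb]⟩
  refine ⟨HahnSeries.ofSuppBddBelow f hf, by simp [f], ?_⟩
  intro n hn₀ hn
  simp only [HahnSeries.coeff_ofSuppBddBelow]
  rcases hn₀.lt_or_gt with hneg | hpos
  · obtain ⟨m, rfl⟩ := hn.resolve_left (not_lt.mpr hneg.le)
    have hm : m < 0 := neg_of_mul_neg_right hneg (by positivity)
    rw [if_pos (dvd_mul_right _ _), Int.mul_ediv_cancel_left _ (by omega), hf_neg _ hneg,
      hf_neg m hm, map_negCoeff p ψ b.coeff M hφψ (hb _ (pow_natAbs_mul_lt hp _ hneg))]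
  · rw [hf_pos n hpos, posCoeff_of_pos hp φ _ hpos]
    split_ifs with hd
    · rw [hf_pos _ (Int.ediv_pos_of_pos_of_dvd hpos (by omega) hd)]
      abel
    · abel

theorem stmt_3_general (p N₀ : ℕ) [Fact p.Prime]
    (k : Type*) [Field k] [Fintype k] [Algebra (ZMod p) k]
    (hcard : Fintype.card k = p ^ N₀)
    (α₀ : k) (htr : Algebra.trace (ZMod p) k α₀ = 1)
    (V : Type*) [AddCommGroup V] [Module k V]
    (φ : V →+ V) (hφbij : Function.Bijective φ)
    (hφsemi : ∀ (c : k) (v : V), φ (c • v) = c ^ p • φ v)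
    (hφord : (⇑φ)^[N₀] = id)
    (σ : LaurentSeries V →+ LaurentSeries V)
    (hσ : ∀ (f : LaurentSeries V) (m : ℤ),
      (σ f).coeff m = if (p : ℤ) ∣ m then φ (f.coeff (m / (p : ℤ))) else 0) :
    ∀ b : LaurentSeries V, ∃ r s : LaurentSeries V,
      b = r + σ s - s ∧
      (∀ n : ℤ, n ∈ r.support → n = 0 ∨ ∃ a : ℕ, 0 < a ∧ Nat.Coprime a p ∧ n = -(a : ℤ)) ∧
      ∃ v : V, φ v = v ∧ r.coeff 0 = α₀ • v := by
  intro b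
  have hp : p.Prime := Fact.out
  have : CharP k p := (Algebra.charP_iff (ZMod p) k p).mp (ZMod.charP p)
  have hα : ∑ i ∈ range N₀, α₀ ^ p ^ i = 1 := by
    rw [← ZMod.card p, FiniteField.sum_range_pow_eq_algebraMap_trace (by rw [ZMod.card, hcard]),
      htr, map_one]
  obtain ⟨v, u, hv, hu⟩ := exists_fixed_smul_add_map_sub hφsemi hφord hα (b.coeff 0)
  obtain ⟨s, hs₀, hs⟩ := LaurentSeries.exists_coeff_add_eq hp.one_lt hφbij b u
  have hr : ∀ n, (b + s - σ s).coeff n =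
      b.coeff n + s.coeff n - if (p : ℤ) ∣ n then φ (s.coeff (n / p)) else 0 := by
    simp [hσ]
  refine ⟨b + s - σ s, s, by abel, fun n hn ↦ ?_, v, hv, ?_⟩
  · rw [HahnSeries.mem_support, hr, sub_ne_zero] at hn
    refine or_iff_not_imp_left.mpr fun hn₀ ↦ ?_
    obtain ⟨hneg, hndvd⟩ := not_or.mp (mt (hs n hn₀) hn)
    have hpn : ¬p ∣ n.natAbs := Int.natCast_dvd.not.mp hndvd
    exact ⟨n.natAbs, by omega, (hp.coprime_iff_not_dvd.mpr hpn).symm, by omega⟩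
  · rw [hr, if_pos (dvd_zero _), Int.zero_ediv, hs₀, hu]
    abel

/-- **Lemma 2.2.** Let `k = 𝔽_{p^{N₀}}`, `α₀ ∈ k` with `Tr_{k/𝔽_p}(α₀) = 1`, `V` a
`k`-vector space with a Frobenius-semilinear bijection `φ` of order `N₀`, and
`σ : V((t)) → V((t))`, `Σ v_n t^n ↦ Σ φ(v_n) t^{pn}`.  Every `b ∈ V((t))` can be written as
`b = r + σ(s) − s` with the support of `r` contained in `{0} ∪ {−a : a ∈ ℤ⁺(p)}` and
`r₀ ∈ α₀·V^{φ=id}`. -/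
theorem stmt_3 (p N₀ : ℕ) [Fact p.Prime] (hN₀ : 0 < N₀)
    (k : Type*) [Field k] [Fintype k] [Algebra (ZMod p) k]
    (hcard : Fintype.card k = p ^ N₀)
    (α₀ : k) (htr : Algebra.trace (ZMod p) k α₀ = 1)
    (V : Type*) [AddCommGroup V] [Module k V]
    (φ : V →+ V) (hφbij : Function.Bijective φ)
    (hφsemi : ∀ (c : k) (v : V), φ (c • v) = c ^ p • φ v)
    (hφord : (⇑φ)^[N₀] = id)
    (σ : LaurentSeries V →+ LaurentSeries V)
    (hσ : ∀ (f : LaurentSeries V) (m : ℤ),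
      (σ f).coeff m = if (p : ℤ) ∣ m then φ (f.coeff (m / (p : ℤ))) else 0) :
    ∀ b : LaurentSeries V, ∃ r s : LaurentSeries V,
      b = r + σ s - s ∧
      (∀ n : ℤ, n ∈ r.support → n = 0 ∨ ∃ a : ℕ, 0 < a ∧ Nat.Coprime a p ∧ n = -(a : ℤ)) ∧
      ∃ v : V, φ v = v ∧ r.coeff 0 = α₀ • v :=
  stmt_3_general p N₀ k hcard α₀ htr V φ hφbij hφsemi hφord σ hσ
end

section
/- For each 1 ≤ i < p the coefficients g_i(m) are uniquely determined by g and m, and the resulting maps g_i : M → M are 𝔽_p-linear; moreover, setting g₀ = id_M and g_i = 0 for i ≥ p, for every i ≥ 0 one has g_i(M) ⊆ (g − id)^i(M), the image of the i-fold composite of the linear map g − id. (Proposition 3.1(a),(b).) -/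
open Finset Polynomial
open scoped Nat

/-!
Since `g ^ p = 1`, `g ^ n` only depends on `n̄`, and the binomial theorem for `g = 1 + (g - 1)`
gives `g ^ n = ∑_{k < p} C(n, k) (g - 1) ^ k`, where `C(n, k) mod p` is the value at `n̄` of the
degree-`k` polynomial `X (X - 1) ⋯ (X - k + 1) / k!`. Collecting powers of `n̄` yields an expansion
whose `i`-th coefficient is `(g - 1) ^ i` times an endomorphism. A polynomial of degree `< p` with
coefficients in `M` vanishing on all of `𝔽_p` is zero (test it against linear functionals), so the
coefficients of such an expansion are unique; this forces `g_i` to be the coefficient found above,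
and linear.
-/

theorem eq_zero_of_forall_sum_pow_smul_eq_zero {K M : Type*} [Field K] [AddCommGroup M]
    [Module K M] {s : Finset K} {S : Finset ℕ} (hS : ∀ i ∈ S, i < #s) {c : ℕ → M}
    (h : ∀ x ∈ s, ∑ i ∈ S, x ^ i • c i = 0) : ∀ i ∈ S, c i = 0 := by
  intro i hi
  rw [← Module.forall_dual_apply_eq_zero_iff K]
  intro ℓ
  set P : K[X] := ∑ j ∈ S, monomial j (ℓ (c j))
  have hP : P = 0 := by
    refine eq_zero_of_degree_lt_of_eval_finset_eq_zero s ?_ fun x hx => ?_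
    · rw [← mem_degreeLT]
      exact Submodule.sum_mem _ fun j hj => by
        rw [mem_degreeLT]
        exact (degree_monomial_le _ _).trans_lt (mod_cast hS j hj)
    · simpa [P, eval_finsetSum, mul_comm] using congrArg ℓ (h x hx)
  simpa [P, finsetSum_coeff, coeff_monomial, hi] using congrArg (coeff · i) hP

theorem ZMod.eq_of_forall_sum_natCast_pow_smul_eq {p : ℕ} [Fact p.Prime] {M : Type*}
    [AddCommGroup M] [Module (ZMod p) M] {S : Finset ℕ} (hS : ∀ i ∈ S, i < p) {c c' : ℕ → M}
    (h : ∀ n : ℕ, ∑ i ∈ S, (n : ZMod p) ^ i • c i = ∑ i ∈ S, (n : ZMod p) ^ i • c' i) :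
    ∀ i ∈ S, c i = c' i := by
  have hc : ∀ x ∈ (univ : Finset (ZMod p)), ∑ i ∈ S, x ^ i • (c i - c' i) = 0 := by
    intro x _
    obtain ⟨n, rfl⟩ := ZMod.natCast_zmod_surjective x
    simp [smul_sub, sum_sub_distrib, h n]
  intro i hi
  exact sub_eq_zero.mp <| eq_zero_of_forall_sum_pow_smul_eq_zero (by simpa using hS) hc i hi

noncomputable def choosePoly (K : Type*) [Field K] (k : ℕ) : K[X] :=
  C (k ! : K)⁻¹ * descPochhammer K k

theorem choosePoly_eval_natCast {K : Type*} [Field K] {k : ℕ} (hk : (k ! : K) ≠ 0) (n : ℕ) :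
    (choosePoly K k).eval (n : K) = n.choose k := by
  rw [choosePoly, eval_mul, eval_C, descPochhammer_eval_eq_descFactorial,
    Nat.descFactorial_eq_factorial_mul_choose, Nat.cast_mul, inv_mul_cancel_left₀ hk]

theorem natDegree_choosePoly_le (K : Type*) [Field K] (k : ℕ) : (choosePoly K k).natDegree ≤ k :=
  (natDegree_C_mul_le _ _).trans (descPochhammer_natDegree K k).le

theorem ZMod.natCast_factorial_ne_zero {p : ℕ} [Fact p.Prime] {k : ℕ} (hk : k < p) :
    (k ! : ZMod p) ≠ 0 := by
  rw [Ne, ZMod.natCast_eq_zero_iff, Nat.Prime.dvd_factorial Fact.out]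
  omega

theorem pow_eq_sum_choose_smul_sub_one_pow {R : Type*} [Ring R] (a : R) (n : ℕ) :
    a ^ n = ∑ k ∈ range (n + 1), n.choose k • (a - 1) ^ k := by
  conv_lhs => rw [← sub_add_cancel a 1, (Commute.one_right (a - 1)).add_pow]
  simp [nsmul_eq_mul, Nat.cast_comm]

section Algebra

variable (p : ℕ) [Fact p.Prime] {A : Type*} [Ring A] [Algebra (ZMod p) A]

noncomputable def powCoeff (a : A) (i : ℕ) : A :=
  ∑ k ∈ range p, (choosePoly (ZMod p) k).coeff i • (a - 1) ^ k

theorem pow_sub_one_pow_dvd_powCoeff (a : A) (i : ℕ) : (a - 1) ^ i ∣ powCoeff p a i := by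
  refine dvd_sum fun k _ => ?_
  rcases le_or_gt i k with hik | hki
  · exact dvd_smul_of_dvd _ (pow_dvd_pow _ hik)
  · rw [coeff_eq_zero_of_natDegree_lt ((natDegree_choosePoly_le _ k).trans_lt hki), zero_smul]
    exact dvd_zero _

theorem pow_eq_sum_choosePoly_eval_smul {a : A} (ha : a ^ p = 1) (n : ℕ) :
    a ^ n = ∑ k ∈ range p, (choosePoly (ZMod p) k).eval (n : ZMod p) • (a - 1) ^ k := by
  have hp := (Fact.out : p.Prime).pos
  have hn := Nat.mod_lt n hp
  rw [pow_eq_pow_mod n ha, ← ZMod.natCast_mod n p, pow_eq_sum_choose_smul_sub_one_pow,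
    sum_subset (range_subset_range.mpr hn) fun k _ hk => by
      rw [Nat.choose_eq_zero_of_lt (by simpa using hk), zero_smul]]
  refine sum_congr rfl fun k hk => ?_
  rw [choosePoly_eval_natCast (ZMod.natCast_factorial_ne_zero (mem_range.mp hk)),
    Nat.cast_smul_eq_nsmul]

theorem pow_eq_sum_natCast_pow_smul_powCoeff {a : A} (ha : a ^ p = 1) (n : ℕ) :
    a ^ n = ∑ i ∈ range p, (n : ZMod p) ^ i • powCoeff p a i := by
  rw [pow_eq_sum_choosePoly_eval_smul p ha]
  simp_rw [powCoeff, smul_sum, smul_smul]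
  rw [sum_comm]
  refine sum_congr rfl fun k hk => ?_
  rw [eval_eq_sum_range' ((natDegree_choosePoly_le _ k).trans_lt (mem_range.mp hk)), sum_smul]
  simp_rw [mul_comm]

theorem powCoeff_zero {a : A} (ha : a ^ p = 1) : powCoeff p a 0 = 1 := by
  -- the expansion of `a ^ 0` keeps only the constant coefficient
  have h := pow_eq_sum_natCast_pow_smul_powCoeff p ha 0
  simp [zero_pow_eq, ite_smul, (Fact.out : p.Prime).pos] at h
  exact h.symm

end Algebra

section Module

variable {p : ℕ} [Fact p.Prime] {M : Type*} [AddCommGroup M] [Module (ZMod p) M]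

def IsPowExpansion (g : M →ₗ[ZMod p] M) (m : M) (c : ℕ → M) : Prop :=
  ∀ n : ℕ, (g ^ n) m = m + ∑ i ∈ Ico 1 p, (n : ZMod p) ^ i • c i

variable {g : M →ₗ[ZMod p] M}

theorem IsPowExpansion.unique {m : M} {c c' : ℕ → M} (h : IsPowExpansion g m c)
    (h' : IsPowExpansion g m c') : ∀ i ∈ Ico 1 p, c i = c' i :=
  ZMod.eq_of_forall_sum_natCast_pow_smul_eq (fun _ hi => (mem_Ico.mp hi).2)
    fun n => add_left_cancel ((h n).symm.trans (h' n))

theorem IsPowExpansion.add {m m' : M} {c c' : ℕ → M} (h : IsPowExpansion g m c)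
    (h' : IsPowExpansion g m' c') : IsPowExpansion g (m + m') (c + c') := by
  intro n
  rw [map_add, h n, h' n]
  simp only [Pi.add_apply, smul_add, sum_add_distrib]
  abel

theorem IsPowExpansion.smul {m : M} {c : ℕ → M} (h : IsPowExpansion g m c) (a : ZMod p) :
    IsPowExpansion g (a • m) (a • c) := by
  intro n
  rw [map_smul, h n, smul_add, smul_sum]
  simp only [Pi.smul_apply, smul_comm a]

theorem isPowExpansion_powCoeff (hg : g ^ p = 1) (m : M) :
    IsPowExpansion g m (fun i => powCoeff p g i m) := by
  intro n
  rw [pow_eq_sum_natCast_pow_smul_powCoeff p hg, range_eq_Ico,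
    sum_eq_sum_Ico_succ_bot (Fact.out : p.Prime).pos, powCoeff_zero p hg]
  simp

end Module

theorem stmt_4_general (p : ℕ) [Fact p.Prime]
    (M : Type*) [AddCommGroup M] [Module (ZMod p) M]
    (g : M →ₗ[ZMod p] M) (hgp : g ^ p = 1)
    (gc : ℕ → M → M)
    (hgc : ∀ m : M, ∀ n : ℕ,
      (g ^ n) m = m + ∑ i ∈ Finset.Ico 1 p, ((n : ZMod p)) ^ i • gc i m) :
    (∀ gc' : ℕ → M → M,
        (∀ m : M, ∀ n : ℕ,
          (g ^ n) m = m + ∑ i ∈ Finset.Ico 1 p, ((n : ZMod p)) ^ i • gc' i m) →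
        ∀ i ∈ Finset.Ico 1 p, ∀ m : M, gc' i m = gc i m) ∧
    (∀ i ∈ Finset.Ico 1 p, IsLinearMap (ZMod p) (gc i)) ∧
    (∀ i : ℕ, ∀ m : M,
      (if i = 0 then m else if i < p then gc i m else 0) ∈
        LinearMap.range ((g - 1) ^ i)) := by
  have hexp : ∀ m, IsPowExpansion g m (fun i => gc i m) := hgc
  refine ⟨fun gc' hgc' i hi m => IsPowExpansion.unique (hgc' m) (hexp m) i hi,
    fun i hi => ⟨fun m m' => ?_, fun a m => ?_⟩, fun i m => ?_⟩
  · exact (hexp (m + m')).unique ((hexp m).add (hexp m')) i hi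
  · exact (hexp (a • m)).unique ((hexp m).smul a) i hi
  split_ifs with h0 hlt
  · subst h0
    exact ⟨m, rfl⟩
  · obtain ⟨c, hc⟩ := pow_sub_one_pow_dvd_powCoeff p g i
    rw [(hexp m).unique (isPowExpansion_powCoeff hgp m) i (mem_Ico.mpr ⟨by omega, hlt⟩), hc]
    exact ⟨c m, rfl⟩
  · exact zero_mem _

/-- **Proposition 3.1 (a),(b).** Given an `𝔽_p`-linear automorphism `g` of `M` with `g^p = 1`
such that `g^n m = m + Σ_{1 ≤ i < p} (n̄)^i • g_i(m)` for some coefficients `g_i(m)`, the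
coefficients are unique, depend `𝔽_p`-linearly on `m`, and (setting `g₀ = id`, `g_i = 0` for
`i ≥ p`) satisfy `g_i(M) ⊆ (g - id)^i(M)`. -/
theorem stmt_4 (p : ℕ) [Fact p.Prime] (hp : 2 < p)
    (M : Type*) [AddCommGroup M] [Module (ZMod p) M]
    (g : M →ₗ[ZMod p] M) (hgp : g ^ p = 1)
    (gc : ℕ → M → M)
    (hgc : ∀ m : M, ∀ n : ℕ,
      (g ^ n) m = m + ∑ i ∈ Finset.Ico 1 p, ((n : ZMod p)) ^ i • gc i m) :
    (∀ gc' : ℕ → M → M,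
        (∀ m : M, ∀ n : ℕ,
          (g ^ n) m = m + ∑ i ∈ Finset.Ico 1 p, ((n : ZMod p)) ^ i • gc' i m) →
        ∀ i ∈ Finset.Ico 1 p, ∀ m : M, gc' i m = gc i m) ∧
    (∀ i ∈ Finset.Ico 1 p, IsLinearMap (ZMod p) (gc i)) ∧
    (∀ i : ℕ, ∀ m : M,
      (if i = 0 then m else if i < p then gc i m else 0) ∈
        LinearMap.range ((g - 1) ^ i)) :=
  stmt_4_general p M g hgp gc hgc
end

section
/- For all integers i, j ≥ 0, g_i ∘ g_j = C(i+j, i)·g_{i+j}, where C(i+j, i) is the binomial coefficient reduced mod p; equivalently, the map g^U = Σ_{i≥0} g_i ⊗ U^i : M → M ⊗ 𝔽_p[[U]] determines an action of the formal additive group on M. (Proposition 3.1(d).) -/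
/-- **Proposition 3.1 (d).** With `g` and the unique coefficient maps `g_i` as in
Proposition 3.1 (and `g₀ = id`, `g_i = 0` for `i ≥ p`), one has
`g_i ∘ g_j = C(i+j, i)·g_{i+j}`; equivalently `g^U = Σ g_i ⊗ U^i` is an action of the formal
additive group on `M`. -/
theorem stmt_6 (p : ℕ) [Fact p.Prime] (hp : 2 < p)
    (M : Type*) [AddCommGroup M] [Module (ZMod p) M]
    (g : M →ₗ[ZMod p] M) (hgp : g ^ p = 1)
    (gc : ℕ → M → M)
    (hgc : ∀ m : M, ∀ n : ℕ,
      (g ^ n) m = m + ∑ i ∈ Finset.Ico 1 p, ((n : ZMod p)) ^ i • gc i m) :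
    ∀ i j : ℕ, ∀ m : M,
      (fun a x => if a = 0 then x else if a < p then gc a x else 0) i
          ((fun a x => if a = 0 then x else if a < p then gc a x else 0) j m) =
        ((Nat.choose (i + j) i : ZMod p)) •
          (fun a x => if a = 0 then x else if a < p then gc a x else 0) (i + j) m := by
  classical
  have hp0 : 0 < p := by omega
  set F : ℕ → M → M := fun a x => if a = 0 then x else if a < p then gc a x else 0 with hFdef
  show ∀ i j : ℕ, ∀ m : M, F i (F j m) = (Nat.choose (i + j) i : ZMod p) • F (i + j) m
  -- Step 1: g^n m = ∑_{k<p} n^k • F k m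
  have hFe : ∀ (m : M) (n : ℕ), (g ^ n) m = ∑ k : Fin p, ((n : ZMod p)) ^ (k : ℕ) • F k m := by
    intro m n
    rw [Fin.sum_univ_eq_sum_range (fun k => ((n : ZMod p)) ^ k • F k m) p,
      Finset.range_eq_Ico, Finset.sum_eq_sum_Ico_succ_bot hp0, hgc m n]
    congr 1
    · simp [hFdef]
    · refine Finset.sum_congr rfl fun k hk => ?_
      simp only [Finset.mem_Ico] at hk
      simp only [hFdef]
      rw [if_neg (by omega), if_pos hk.2]
  -- Vandermonde setup
  set ε : Fin p → ZMod p := fun n => ((n : ℕ) : ZMod p) with hεdef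
  have hε : Function.Injective ε := by
    intro a b hab
    have h : ((a : ℕ) : ZMod p).val = ((b : ℕ) : ZMod p).val := congrArg ZMod.val hab
    rw [ZMod.val_cast_of_lt a.isLt, ZMod.val_cast_of_lt b.isLt] at h
    exact Fin.ext h
  set V : Matrix (Fin p) (Fin p) (ZMod p) := Matrix.vandermonde ε with hVdef
  have hdet : IsUnit V.det := by
    rw [hVdef, Matrix.det_vandermonde]
    rw [isUnit_iff_ne_zero, Finset.prod_ne_zero_iff]
    intro a _
    rw [Finset.prod_ne_zero_iff]
    intro b hb
    rw [Finset.mem_Ioi] at hb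
    exact sub_ne_zero_of_ne fun h => hb.ne' (hε h)
  set W := V⁻¹ with hWdef
  have hWV : W * V = 1 := Matrix.nonsing_inv_mul V hdet
  have hWVe : ∀ (a b : Fin p), (∑ n : Fin p, W a n * ε n ^ (b : ℕ)) = if a = b then 1 else 0 := by
    intro a b
    have h := congrFun (congrFun hWV a) b
    rw [Matrix.mul_apply] at h
    simp only [hVdef, Matrix.vandermonde_apply] at h
    rw [h, Matrix.one_apply]
  have hWVe' : ∀ (c : Fin p) (a : ℕ), a < p →
      (∑ n : Fin p, W c n * ε n ^ a) = if (c : ℕ) = a then 1 else 0 := by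
    intro c a ha
    have h := hWVe c ⟨a, ha⟩
    simpa [Fin.ext_iff] using h
  -- Step 2: F a m = ∑ n, W a n • g^n m  for a : Fin p
  have hFW : ∀ (a : Fin p) (m : M), F (a : ℕ) m = ∑ n : Fin p, W a n • (g ^ (n : ℕ)) m := by
    intro a m
    calc F (a : ℕ) m = ∑ k : Fin p, (if a = k then (1 : ZMod p) else 0) • F (k : ℕ) m := by
          simp
      _ = ∑ k : Fin p, (∑ n : Fin p, W a n * ε n ^ (k : ℕ)) • F (k : ℕ) m := by
          simp_rw [hWVe]
      _ = ∑ k : Fin p, ∑ n : Fin p, (W a n * ε n ^ (k : ℕ)) • F (k : ℕ) m := by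
          simp_rw [Finset.sum_smul]
      _ = ∑ n : Fin p, ∑ k : Fin p, (W a n * ε n ^ (k : ℕ)) • F (k : ℕ) m := Finset.sum_comm
      _ = ∑ n : Fin p, W a n • (g ^ (n : ℕ)) m := by
          refine Finset.sum_congr rfl fun n _ => ?_
          rw [hFe m n, Finset.smul_sum]
          refine Finset.sum_congr rfl fun k _ => ?_
          rw [smul_smul]
  -- F a 0 = 0
  have hF0 : ∀ a : ℕ, F a (0 : M) = 0 := by
    intro a
    rcases eq_or_ne a 0 with rfl | ha0
    · simp [hFdef]
    rcases lt_or_ge a p with hap | hap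
    · have h := hFW ⟨a, hap⟩ 0
      simpa using h
    · simp only [hFdef]
      rw [if_neg ha0, if_neg (by omega)]
  intro i j m
  rcases eq_or_ne i 0 with rfl | hi0
  · simp [hFdef]
  rcases eq_or_ne j 0 with rfl | hj0
  · simp [hFdef]
  rcases le_or_gt p i with hpi | hpi
  · have h1 : F i (F j m) = 0 := by
      simp only [hFdef]; rw [if_neg hi0, if_neg (by omega)]
    have h2 : F (i + j) m = 0 := by
      simp only [hFdef]; rw [if_neg (by omega), if_neg (by omega)]
    rw [h1, h2, smul_zero]
  rcases le_or_gt p j with hpj | hpj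
  · have h1 : F j m = 0 := by
      simp only [hFdef]; rw [if_neg hj0, if_neg (by omega)]
    have h2 : F (i + j) m = 0 := by
      simp only [hFdef]; rw [if_neg (by omega), if_neg (by omega)]
    rw [h1, h2, hF0, smul_zero]
  -- main case: 1 ≤ i < p, 1 ≤ j < p
  have key : F i (F j m)
      = ∑ l : Fin p,
          (∑ n : Fin p, ∑ k : Fin p, W ⟨i, hpi⟩ n * W ⟨j, hpj⟩ k * (ε n + ε k) ^ (l : ℕ))
            • F (l : ℕ) m := by
    calc F i (F j m) = ∑ n : Fin p, W ⟨i, hpi⟩ n • (g ^ (n : ℕ)) (F j m) := hFW ⟨i, hpi⟩ (F j m)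
      _ = ∑ n : Fin p, W ⟨i, hpi⟩ n •
            (g ^ (n : ℕ)) (∑ k : Fin p, W ⟨j, hpj⟩ k • (g ^ (k : ℕ)) m) := by
          rw [← hFW ⟨j, hpj⟩ m]
      _ = ∑ n : Fin p, ∑ k : Fin p,
            (W ⟨i, hpi⟩ n * W ⟨j, hpj⟩ k) • (g ^ ((n : ℕ) + (k : ℕ))) m := by
          refine Finset.sum_congr rfl fun n _ => ?_
          rw [map_sum, Finset.smul_sum]
          refine Finset.sum_congr rfl fun k _ => ?_
          rw [map_smul, smul_smul, pow_add, Module.End.mul_apply]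
      _ = ∑ n : Fin p, ∑ k : Fin p, ∑ l : Fin p,
            (W ⟨i, hpi⟩ n * W ⟨j, hpj⟩ k * (ε n + ε k) ^ (l : ℕ)) • F (l : ℕ) m := by
          refine Finset.sum_congr rfl fun n _ => Finset.sum_congr rfl fun k _ => ?_
          rw [hFe m ((n : ℕ) + (k : ℕ)), Finset.smul_sum]
          refine Finset.sum_congr rfl fun l _ => ?_
          rw [smul_smul]
          congr 2
          push_cast [hεdef]
          ring
      _ = ∑ n : Fin p, ∑ l : Fin p, ∑ k : Fin p,
            (W ⟨i, hpi⟩ n * W ⟨j, hpj⟩ k * (ε n + ε k) ^ (l : ℕ)) • F (l : ℕ) m := by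
          exact Finset.sum_congr rfl fun n _ => Finset.sum_comm
      _ = ∑ l : Fin p, ∑ n : Fin p, ∑ k : Fin p,
            (W ⟨i, hpi⟩ n * W ⟨j, hpj⟩ k * (ε n + ε k) ^ (l : ℕ)) • F (l : ℕ) m :=
          Finset.sum_comm
      _ = _ := by
          simp_rw [Finset.sum_smul]
  have hcoef : ∀ l : Fin p,
      (∑ n : Fin p, ∑ k : Fin p, W ⟨i, hpi⟩ n * W ⟨j, hpj⟩ k * (ε n + ε k) ^ (l : ℕ))
        = if (l : ℕ) = i + j then (Nat.choose (i + j) i : ZMod p) else 0 := by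
    intro l
    have expand : ∀ n k : Fin p,
        W ⟨i, hpi⟩ n * W ⟨j, hpj⟩ k * (ε n + ε k) ^ (l : ℕ)
          = ∑ a ∈ Finset.range ((l : ℕ) + 1),
              (W ⟨i, hpi⟩ n * ε n ^ a) * (W ⟨j, hpj⟩ k * ε k ^ ((l : ℕ) - a))
                * (Nat.choose (l : ℕ) a : ZMod p) := by
      intro n k
      rw [add_pow, Finset.mul_sum]
      exact Finset.sum_congr rfl fun a _ => by ring
    calc (∑ n : Fin p, ∑ k : Fin p, W ⟨i, hpi⟩ n * W ⟨j, hpj⟩ k * (ε n + ε k) ^ (l : ℕ))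
        = ∑ a ∈ Finset.range ((l : ℕ) + 1), ∑ n : Fin p, ∑ k : Fin p,
            (W ⟨i, hpi⟩ n * ε n ^ a) * (W ⟨j, hpj⟩ k * ε k ^ ((l : ℕ) - a))
              * (Nat.choose (l : ℕ) a : ZMod p) := by
          simp_rw [expand]
          rw [show (∑ n : Fin p, ∑ k : Fin p, ∑ a ∈ Finset.range ((l : ℕ) + 1),
              (W ⟨i, hpi⟩ n * ε n ^ a) * (W ⟨j, hpj⟩ k * ε k ^ ((l : ℕ) - a))
                * (Nat.choose (l : ℕ) a : ZMod p))
            = ∑ n : Fin p, ∑ a ∈ Finset.range ((l : ℕ) + 1), ∑ k : Fin p,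
              (W ⟨i, hpi⟩ n * ε n ^ a) * (W ⟨j, hpj⟩ k * ε k ^ ((l : ℕ) - a))
                * (Nat.choose (l : ℕ) a : ZMod p)
            from Finset.sum_congr rfl fun n _ => Finset.sum_comm]
          exact Finset.sum_comm
      _ = ∑ a ∈ Finset.range ((l : ℕ) + 1),
            (∑ n : Fin p, W ⟨i, hpi⟩ n * ε n ^ a)
              * (∑ k : Fin p, W ⟨j, hpj⟩ k * ε k ^ ((l : ℕ) - a))
              * (Nat.choose (l : ℕ) a : ZMod p) := by
          refine Finset.sum_congr rfl fun a _ => ?_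
          rw [Finset.sum_mul_sum, Finset.sum_mul]
          exact Finset.sum_congr rfl fun n _ => (Finset.sum_mul _ _ _).symm
      _ = ∑ a ∈ Finset.range ((l : ℕ) + 1),
            (if i = a then (1 : ZMod p) else 0) * (if j = (l : ℕ) - a then (1 : ZMod p) else 0)
              * (Nat.choose (l : ℕ) a : ZMod p) := by
          refine Finset.sum_congr rfl fun a ha => ?_
          rw [Finset.mem_range] at ha
          rw [hWVe' ⟨i, hpi⟩ a (by omega), hWVe' ⟨j, hpj⟩ ((l : ℕ) - a) (by omega)]
      _ = if (l : ℕ) = i + j then (Nat.choose (i + j) i : ZMod p) else 0 := by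
          by_cases hl : (l : ℕ) = i + j
          · rw [if_pos hl, Finset.sum_eq_single i]
            · rw [if_pos rfl, if_pos (by omega), one_mul, one_mul, hl]
            · intro b hb hbi
              rw [if_neg fun h => hbi h.symm, zero_mul, zero_mul]
            · intro h
              exfalso
              exact h (Finset.mem_range.mpr (by omega))
          · rw [if_neg hl]
            refine Finset.sum_eq_zero fun a ha => ?_
            rw [Finset.mem_range] at ha
            by_cases hai : i = a
            · rw [if_pos hai, if_neg (by omega), one_mul, zero_mul]
            · rw [if_neg hai, zero_mul, zero_mul]
  rw [key]
  simp_rw [hcoef]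
  rcases lt_or_ge (i + j) p with hij | hij
  · rw [Finset.sum_eq_single (⟨i + j, hij⟩ : Fin p)]
    · rw [if_pos rfl]
    · intro b _ hb
      rw [if_neg (fun h => hb (Fin.ext h)), zero_smul]
    · intro h
      exact absurd (Finset.mem_univ _) h
  · have h2 : F (i + j) m = 0 := by
      simp only [hFdef]; rw [if_neg (by omega), if_neg (by omega)]
    rw [h2, smul_zero]
    refine Finset.sum_eq_zero fun l _ => ?_
    rw [if_neg (by omega), zero_smul]
end

section
/- If d(i₁,…,i_s) = i₁ + ⋯ + i_s + s < p, then there exists a polynomial F ∈ ℤ_p[U] with p-adic integer coefficients such that F(n) = f_{i₁…i_s}(n) for every natural number n, F(0) = 0, and deg F = d(i₁,…,i_s). (Lemma 3.3.) -/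
/-!
Splitting off the largest index gives
`f_{i₁…i_{s+1}}(n) = ∑_{j<n} j^{i_{s+1}} f_{i₁…i_s}(j)`, so by induction on `s` it suffices that
discrete summation `H ↦ (n ↦ ∑_{m<n} H(m))` turns a polynomial of degree `d` with unit leading
coefficient into one of degree `d + 1` with unit leading coefficient whenever `(d + 1)!` is a unit.
Over any commutative ring this follows by peeling off the top term of `H` in the falling-factorial
basis, where `∑_{m<n} (m)ₖ = (n)ₖ₊₁ / (k + 1)`. In `ℤ_[p]` the factorials up to
`d = i₁ + ⋯ + i_s + s < p` are units.
-/

open Polynomial Finset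
open scoped Nat

section StrictMonoPowSum
variable (R : Type*) [CommSemiring R]

open scoped Classical in
/-- The paper's `f_{i₁…i_s}(n)`, with values in `R`. -/
noncomputable def strictMonoPowSum (s : ℕ) (idx : Fin s → ℕ) (n : ℕ) : R :=
  ∑ m ∈ univ.filter (fun m : Fin s → Fin n => StrictMono m),
    ∏ t : Fin s, ((m t : ℕ) : R) ^ idx t

variable {R}

lemma strictMonoPowSum_zero (idx : Fin 0 → ℕ) (n : ℕ) : strictMonoPowSum R 0 idx n = 1 := by
  classical
  rw [strictMonoPowSum, filter_true_of_mem fun m _ => Subsingleton.strictMono m]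
  simp

lemma strictMonoPowSum_apply_zero {s : ℕ} (hs : 0 < s) (idx : Fin s → ℕ) :
    strictMonoPowSum R s idx 0 = 0 := by
  have : IsEmpty (Fin s → Fin 0) := ⟨fun m => (m ⟨0, hs⟩).elim0⟩
  simp [strictMonoPowSum, univ_eq_empty]

lemma Fin.strictMono_snoc {α : Type*} [Preorder α] {s : ℕ} {f : Fin s → α} {x : α}
    (hf : StrictMono f) (hx : ∀ i, f i < x) : StrictMono (Fin.snoc f x : Fin (s + 1) → α) := by
  intro a b hab
  obtain ⟨u, rfl⟩ := Fin.exists_castSucc_eq.mpr (Fin.ne_last_of_lt hab)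
  rcases Fin.eq_castSucc_or_eq_last b with ⟨v, rfl⟩ | rfl
  · simpa only [Fin.snoc_castSucc] using hf (Fin.castSucc_lt_castSucc_iff.mp hab)
  · simpa only [Fin.snoc_castSucc, Fin.snoc_last] using hx u

open scoped Classical in
lemma sum_strictMono_last_eq (s : ℕ) (idx : Fin (s + 1) → ℕ) {n : ℕ} (j : Fin n) :
    ∑ m ∈ univ.filter (fun m : Fin (s + 1) → Fin n => StrictMono m ∧ m (Fin.last s) = j),
      ∏ t, ((m t : ℕ) : R) ^ idx t =
      (j : R) ^ idx (Fin.last s) * strictMonoPowSum R s (idx ∘ Fin.castSucc) j := by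
  rw [strictMonoPowSum, mul_sum]
  refine sum_bij'
    (fun m hm t => ⟨m t.castSucc, by
      obtain ⟨hmono, hlast⟩ := (mem_filter.mp hm).2
      exact hlast ▸ hmono (Fin.castSucc_lt_last t)⟩)
    (fun m' _ => Fin.snoc (Fin.castLE j.isLt.le ∘ m') j) ?_ ?_ ?_ ?_ ?_
  · intro m hm
    simp only [mem_filter, mem_univ, true_and] at hm ⊢
    exact fun a b hab => hm.1 (Fin.castSucc_lt_castSucc_iff.mpr hab)
  · intro m' hm'
    simp only [mem_filter, mem_univ, true_and] at hm' ⊢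
    exact ⟨Fin.strictMono_snoc ((Fin.strictMono_castLE _).comp hm') fun i => (m' i).isLt,
      Fin.snoc_last _ _⟩
  · intro m hm
    funext t
    refine Fin.lastCases ?_ (fun u => ?_) t
    · simp [(mem_filter.mp hm).2.2]
    · simp [Fin.castLE]
  · intro m' _
    funext u
    simp [Fin.castLE]
  · intro m hm
    obtain ⟨-, rfl⟩ := (mem_filter.mp hm).2
    rw [Fin.prod_univ_castSucc, mul_comm]
    rfl

lemma strictMonoPowSum_succ (s : ℕ) (idx : Fin (s + 1) → ℕ) (n : ℕ) :
    strictMonoPowSum R (s + 1) idx n = ∑ j ∈ range n,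
      (j : R) ^ idx (Fin.last s) * strictMonoPowSum R s (idx ∘ Fin.castSucc) j := by
  classical
  rw [← Fin.sum_univ_eq_sum_range (fun j => (j : R) ^ idx (Fin.last s) *
      strictMonoPowSum R s (idx ∘ Fin.castSucc) j), strictMonoPowSum,
    ← sum_fiberwise_of_maps_to (g := fun m => m (Fin.last s)) fun m _ => mem_univ _]
  simp only [filter_filter, sum_strictMono_last_eq]

end StrictMonoPowSum

section Summation
variable {R : Type*} [CommRing R]

lemma coeff_descPochhammer_self (k : ℕ) : (descPochhammer R k).coeff k = 1 := by
  have h := (monic_descPochhammer ℤ k).coeff_natDegree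
  rw [descPochhammer_natDegree] at h
  rw [← descPochhammer_map (Int.castRingHom R), coeff_map, h, map_one]

lemma coeff_descPochhammer_of_lt {k N : ℕ} (h : k < N) : (descPochhammer R k).coeff N = 0 := by
  rw [← descPochhammer_map (Int.castRingHom R), coeff_map,
    coeff_eq_zero_of_natDegree_lt ((descPochhammer_natDegree ℤ k).trans_lt h), map_zero]

lemma natDegree_descPochhammer_le (k : ℕ) : (descPochhammer R k).natDegree ≤ k :=
  natDegree_le_iff_coeff_eq_zero.mpr fun _ hN => coeff_descPochhammer_of_lt hN

lemma descPochhammer_eval_natCast_succ (k n : ℕ) :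
    (descPochhammer R (k + 1)).eval (n : R) =
      (k + 1) * ∑ m ∈ range n, (descPochhammer R k).eval (m : R) := by
  induction n with
  | zero => simp [descPochhammer_succ_left]
  | succ n ih =>
    rw [sum_range_succ, mul_add, ← ih, descPochhammer_succ_eval k (n : R),
      descPochhammer_succ_left, eval_mul, eval_comp]
    simp only [Nat.cast_add, Nat.cast_one, eval_X, eval_sub, eval_one, add_sub_cancel_right]
    ring

lemma natDegree_sub_C_mul_descPochhammer_le {d : ℕ} {H : R[X]} (hH : H.natDegree ≤ d + 1) :
    (H - C (H.coeff (d + 1)) * descPochhammer R (d + 1)).natDegree ≤ d := by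
  refine natDegree_le_iff_coeff_eq_zero.mpr fun N hN => ?_
  rw [coeff_sub, coeff_C_mul]
  obtain rfl | hlt := (Nat.succ_le_of_lt hN).eq_or_lt
  · rw [coeff_descPochhammer_self, mul_one, sub_self]
  · rw [coeff_eq_zero_of_natDegree_lt (hH.trans_lt hlt), coeff_descPochhammer_of_lt hlt,
      mul_zero, sub_zero]

lemma exists_eval_natCast_eq_sum_range (d : ℕ) {H : R[X]} (hH : H.natDegree ≤ d)
    (hd : IsUnit ((d + 1)! : R)) :
    ∃ S : R[X], (∀ n : ℕ, S.eval (n : R) = ∑ m ∈ range n, H.eval (m : R)) ∧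
      S.natDegree ≤ d + 1 ∧ (d + 1 : R) * S.coeff (d + 1) = H.coeff d := by
  induction d generalizing H with
  | zero =>
    refine ⟨C (H.coeff 0) * X, fun n => ?_, natDegree_C_mul_le _ _ |>.trans natDegree_X_le,
      by simp⟩
    conv_rhs => rw [eq_C_of_natDegree_le_zero hH]
    simp only [eval_mul, eval_C, eval_X, sum_const, card_range, nsmul_eq_mul, mul_comm]
  | succ d ih =>
    set c := H.coeff (d + 1)
    obtain ⟨u, hu⟩ : IsUnit ((d + 2 : ℕ) : R) :=
      isUnit_of_dvd_unit (Nat.cast_dvd_cast (Nat.dvd_factorial (by omega) le_rfl)) hd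
    obtain ⟨S, hS, hSdeg, -⟩ := ih (natDegree_sub_C_mul_descPochhammer_le hH)
      (isUnit_of_dvd_unit (Nat.cast_dvd_cast (Nat.factorial_dvd_factorial d.succ.le_succ)) hd)
    have hinv : ((d + 2 : ℕ) : R) * ↑u⁻¹ = 1 := by rw [← hu, Units.mul_inv]
    push_cast at hinv
    refine ⟨S + C (c * ↑u⁻¹) * descPochhammer R (d + 2), fun n => ?_, ?_, ?_⟩
    · rw [eval_add, eval_mul, eval_C, hS, descPochhammer_eval_natCast_succ]
      simp only [eval_sub, eval_mul, eval_C, sum_sub_distrib, ← mul_sum]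
      push_cast
      linear_combination (c * ∑ m ∈ range n, (descPochhammer R (d + 1)).eval (m : R)) * hinv
    · exact natDegree_add_le_of_degree_le (hSdeg.trans (by omega))
        ((natDegree_C_mul_le _ _).trans (natDegree_descPochhammer_le _))
    · rw [coeff_add, coeff_C_mul, coeff_descPochhammer_self,
        coeff_eq_zero_of_natDegree_lt (hSdeg.trans_lt (by omega))]
      push_cast
      linear_combination c * hinv

lemma exists_eval_natCast_eq_sum_range_of_isUnit_leadingCoeff [Nontrivial R] {H : R[X]}
    (hH : IsUnit H.leadingCoeff) (hd : IsUnit ((H.natDegree + 1)! : R)) :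
    ∃ S : R[X], (∀ n : ℕ, S.eval (n : R) = ∑ m ∈ range n, H.eval (m : R)) ∧
      S.natDegree = H.natDegree + 1 ∧ IsUnit S.leadingCoeff := by
  obtain ⟨S, hS, hSdeg, hScoeff⟩ := exists_eval_natCast_eq_sum_range _ le_rfl hd
  have hunit : IsUnit (S.coeff (H.natDegree + 1)) :=
    isUnit_of_mul_isUnit_right (x := (H.natDegree + 1 : R)) (by rwa [hScoeff])
  have hdeg : S.natDegree = H.natDegree + 1 :=
    natDegree_eq_of_le_of_coeff_ne_zero hSdeg hunit.ne_zero
  exact ⟨S, hS, hdeg, by rwa [leadingCoeff, hdeg]⟩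

end Summation

theorem exists_eval_natCast_eq_strictMonoPowSum {R : Type*} [CommRing R] [Nontrivial R] (s : ℕ)
    (idx : Fin s → ℕ) (hd : IsUnit ((∑ t, idx t + s)! : R)) :
    ∃ F : R[X], (∀ n : ℕ, F.eval (n : R) = strictMonoPowSum R s idx n) ∧
      F.natDegree = ∑ t, idx t + s ∧ IsUnit F.leadingCoeff := by
  induction s with
  | zero => exact ⟨1, fun n => by simp [strictMonoPowSum_zero], by simp, by simp⟩
  | succ s ih =>
    have hsum : ∑ t, idx t + (s + 1) =
        idx (Fin.last s) + (∑ t, (idx ∘ Fin.castSucc) t + s) + 1 := by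
      rw [Fin.sum_univ_castSucc]; simp only [Function.comp]; ring
    rw [hsum] at hd ⊢
    obtain ⟨G, hG, hGdeg, hGunit⟩ := ih (idx ∘ Fin.castSucc)
      (isUnit_of_dvd_unit (Nat.cast_dvd_cast (Nat.factorial_dvd_factorial (by omega))) hd)
    have hHdeg : (X ^ idx (Fin.last s) * G).natDegree =
        idx (Fin.last s) + (∑ t, (idx ∘ Fin.castSucc) t + s) := by
      rw [(monic_X_pow _).natDegree_mul' (by simpa using hGunit.ne_zero), natDegree_X_pow, hGdeg]
    obtain ⟨S, hS, hSdeg, hSunit⟩ := exists_eval_natCast_eq_sum_range_of_isUnit_leadingCoeff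
      (H := X ^ idx (Fin.last s) * G) (by rwa [leadingCoeff_monic_mul (monic_X_pow _)])
      (by rwa [hHdeg])
    refine ⟨S, fun n => ?_, by rw [hSdeg, hHdeg], hSunit⟩
    simp only [hS, strictMonoPowSum_succ, eval_mul, eval_pow, eval_X, hG]

lemma PadicInt.isUnit_factorial_of_lt {p : ℕ} [hp : Fact p.Prime] {k : ℕ} (hk : k < p) :
    IsUnit (k ! : ℤ_[p]) :=
  PadicInt.isUnit_iff.mpr <|
    PadicInt.norm_natCast_eq_one_iff.mpr (hp.out.coprime_factorial_of_lt hk)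

open scoped Classical in
/-- **Lemma 3.3.** For `s ≥ 1`, `i₁, …, i_s ≥ 0` with `d = i₁ + ⋯ + i_s + s < p`, the function
`f(n) = Σ_{0 ≤ m₁ < ⋯ < m_s < n} m₁^{i₁}⋯m_s^{i_s}` (convention `0⁰ = 1`) is given by a
polynomial `F ∈ ℤ_p[U]` with `F(0) = 0` and `deg F = d`. -/
theorem stmt_9 (p : ℕ) [Fact p.Prime] (s : ℕ) (hs : 1 ≤ s)
    (idx : Fin s → ℕ) (hd : (∑ t, idx t) + s < p) :
    ∃ F : Polynomial ℤ_[p],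
      (∀ n : ℕ,
        Polynomial.eval (n : ℤ_[p]) F =
          ∑ m ∈ Finset.univ.filter (fun m : Fin s → Fin n => StrictMono m),
            ∏ t : Fin s, ((m t : ℕ) : ℤ_[p]) ^ idx t) ∧
      Polynomial.eval 0 F = 0 ∧
      F.natDegree = (∑ t, idx t) + s := by
  obtain ⟨F, hF, hdeg, -⟩ :=
    exists_eval_natCast_eq_strictMonoPowSum s idx (PadicInt.isUnit_factorial_of_lt hd)
  refine ⟨F, hF, ?_, hdeg⟩
  simpa [strictMonoPowSum_apply_zero hs] using hF 0
end

section
/- There exists N₁ such that for every integer N ≥ N₁, one has L_k(p) ⊆ I_N(c₀); that is, the weight-p part of the filtration is contained in the ideal generated by the elements ℱ⁰_{γ,−N} with γ ≥ c₀. (Proposition 4.3: 𝓛(p) ⊆ 𝓛^{(c₀)}.) -/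
namespace AbrLie

variable (p N₀ : ℕ) [Fact p.Prime] (k : Type*) [Field k]

/-- Indexing set of the free generators `D_{a,n}` (`a ∈ ℤ⁺(p)`, `n ∈ ℤ/N₀`) and `D₀`. -/
abbrev Idx : Type := ({a : ℕ // 0 < a ∧ Nat.Coprime a p} × ZMod N₀) ⊕ Unit

/-- The free Lie `k`-algebra on the generators. -/
abbrev Lfree : Type _ := FreeLieAlgebra k (Idx p N₀)

/-- `L_k`: the quotient of the free Lie algebra by the ideal of commutators of order `≥ p`,
i.e. by the `p`-th term `C_p` of the lower central series (Mathlib's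
`lowerCentralSeries … (p-1)`). -/
abbrev Lq : Type _ :=
  Lfree p N₀ k ⧸ LieModule.lowerCentralSeries k (Lfree p N₀ k) (Lfree p N₀ k) (p - 1)

/-- The generator `D_{a,n}` in `L_k`. -/
noncomputable def DD (a : {a : ℕ // 0 < a ∧ Nat.Coprime a p}) (n : ZMod N₀) : Lq p N₀ k :=
  LieSubmodule.Quotient.mk' _ (FreeLieAlgebra.of k (Sum.inl (a, n)))

/-- The generator `D₀` in `L_k`. -/
noncomputable def D0 : Lq p N₀ k :=
  LieSubmodule.Quotient.mk' _ (FreeLieAlgebra.of k (Sum.inr ()))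

/-- `D_{a,n}` for `a ∈ ℤ⁰(p)`: the generator for `a ∈ ℤ⁺(p)`, and `α₀^{p^n}·D₀` for `a = 0`. -/
noncomputable def Dfun (α₀ : k) (a : ℕ) (n : ZMod N₀) : Lq p N₀ k :=
  if h : 0 < a ∧ Nat.Coprime a p then DD p N₀ k ⟨a, h⟩ n
  else if a = 0 then α₀ ^ p ^ n.val • D0 p N₀ k
  else 0

/-- The left-normed iterated bracket `[…[[x₁,x₂],x₃],…,x_s]` of a list. -/
def lieFold {L : Type*} [LieRing L] : List L → L
  | [] => 0
  | x :: xs => xs.foldl (fun a b => ⁅a, b⁆) x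

/-- The coefficient `η(n₁,…,n_s) = (s₁!·(s₂−s₁)!⋯(s_r−s_{r−1})!)^{−1}` attached to a weakly
decreasing sequence, encoded as the inverse of the product over `i` of the number of indices
`j ≤ i` with `n_j = n_i`. -/
noncomputable def eta {s : ℕ} (n : Fin s → ℤ) : k :=
  (∏ i : Fin s, (((Finset.univ.filter fun j : Fin s => n j = n i ∧ j ≤ i).card : ℕ) : k))⁻¹

/-- The element `ℱ⁰_{γ,−N} ∈ L_k`: the sum of
`a₁·η(n₁,…,n_s)·[…[[D_{a₁,n̄₁},D_{a₂,n̄₂}],…],D_{a_s,n̄_s}]` over `1 ≤ s < p`,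
`a_i ∈ ℤ⁰(p)`, `0 = n₁ ≥ n₂ ≥ ⋯ ≥ n_s ≥ −N` with `Σ a_i p^{n_i} = γ`. -/
noncomputable def Fcal (α₀ : k) (γ : ℚ) (N : ℕ) : Lq p N₀ k :=
  ∑ᶠ x : Σ s : ℕ, (Fin s → ℕ) × (Fin s → ℤ),
    if hs : 1 ≤ x.1 ∧ x.1 < p then
      if (∀ i, p ∣ x.2.1 i → x.2.1 i = 0) ∧
          x.2.2 ⟨0, hs.1⟩ = 0 ∧
          (∀ i j : Fin x.1, i ≤ j → x.2.2 j ≤ x.2.2 i) ∧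
          (∀ i, -(N : ℤ) ≤ x.2.2 i) ∧
          (∑ i, (x.2.1 i : ℚ) * (p : ℚ) ^ x.2.2 i) = γ then
        (((x.2.1 ⟨0, hs.1⟩ : ℕ) : k) * eta k x.2.2) •
          lieFold (List.ofFn fun i => Dfun p N₀ k α₀ (x.2.1 i) ((x.2.2 i : ℤ) : ZMod N₀))
      else 0
    else 0

/-- The weight of a generator `D_{a,n}`: the unique `s` with `(s−1)c₀ ≤ a < s·c₀`
(with `wt D₀ = 1`, corresponding to `a = 0`). -/
def wtD (c₀ a : ℕ) : ℕ := a / c₀ + 1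

/-- `IsMon x w`: `x` is an iterated bracket monomial in the generators, of total weight `w`. -/
inductive IsMon (c₀ : ℕ) : Lq p N₀ k → ℕ → Prop
  | gen (a : {a : ℕ // 0 < a ∧ Nat.Coprime a p}) (n : ZMod N₀) :
      IsMon c₀ (DD p N₀ k a n) (wtD c₀ a)
  | zero : IsMon c₀ (D0 p N₀ k) 1
  | brkt {x y : Lq p N₀ k} {w₁ w₂ : ℕ} :
      IsMon c₀ x w₁ → IsMon c₀ y w₂ → IsMon c₀ ⁅x, y⁆ (w₁ + w₂)

/-- `L_k(s)`: the `k`-span of all iterated bracket monomials in the generators whose weights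
sum to at least `s`. -/
noncomputable def Lk (c₀ s : ℕ) : Submodule k (Lq p N₀ k) :=
  Submodule.span k {x : Lq p N₀ k | ∃ w : ℕ, s ≤ w ∧ IsMon p N₀ k c₀ x w}

/-- `I_N(c₀)`: the smallest `σ`-invariant Lie ideal of `L_k` containing all `ℱ⁰_{γ,−N}` with
`γ ≥ c₀`. -/
noncomputable def ramIdeal (σ : Lq p N₀ k → Lq p N₀ k) (α₀ : k) (c₀ N : ℕ) :
    LieIdeal k (Lq p N₀ k) :=
  sInf {I : LieIdeal k (Lq p N₀ k) |
    (∀ x ∈ I, σ x ∈ I) ∧ ∀ γ : ℚ, (c₀ : ℚ) ≤ γ → Fcal p N₀ k α₀ γ N ∈ I}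

/-!
For `a ≥ c₀` prime to `p`, `ℱ⁰_{a,−N}` is `a·D_{a,0}` plus brackets of at least two generators
`D_{a_i,n_i}` with `Σ a_i ≥ Σ a_i p^{n_i} = a`; since the weight is subadditive, these brackets have
weight `≥ wt(D_{a,0})`. Applying `σ`, and using that `a` is a unit of `k` fixed by Frobenius,
every `D_{a,n}` of weight `> 1` is congruent modulo `I_N(c₀)` to a combination of monomials of at
least its weight in at least two generators. So a monomial of weight `w` in `ℓ < w` generators
is congruent to monomials of weight `≥ w` in `ℓ + 1` generators, while monomials in `≥ p`
generators vanish because `L_k` is nilpotent of class `< p`. Starting from weight `≥ p`, this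
puts `L_k(p)` inside `I_N(c₀)` for every `N`.
-/

end AbrLie

namespace LieModule

variable {R L : Type*} [CommRing R] [LieRing L] [LieAlgebra R L]

theorem lie_mem_lowerCentralSeries {m n : ℕ} {x y : L}
    (hx : x ∈ lowerCentralSeries R L L m) (hy : y ∈ lowerCentralSeries R L L n) :
    ⁅x, y⁆ ∈ lowerCentralSeries R L L (m + n + 1) := by
  induction n generalizing m x y with
  | zero =>
    rw [← lie_skew, lowerCentralSeries_succ]
    exact neg_mem (LieSubmodule.lie_mem_lie (LieSubmodule.mem_top y) hx)
  | succ n ih =>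
    rw [lowerCentralSeries_succ, ← LieSubmodule.mem_toSubmodule,
      LieSubmodule.lieIdeal_oper_eq_linear_span'] at hy
    induction hy using Submodule.span_induction with
    | mem w hw =>
      obtain ⟨z, -, w, hw, rfl⟩ := hw
      have hxz : ⁅x, z⁆ ∈ lowerCentralSeries R L L (m + 1) := by
        rw [← lie_skew, lowerCentralSeries_succ]
        exact neg_mem (LieSubmodule.lie_mem_lie (LieSubmodule.mem_top z) hx)
      have hzxw : ⁅z, ⁅x, w⁆⁆ ∈ lowerCentralSeries R L L (m + n + 1 + 1) := by
        rw [lowerCentralSeries_succ]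
        exact LieSubmodule.lie_mem_lie (LieSubmodule.mem_top z) (ih hx hw)
      rw [leibniz_lie]
      exact add_mem (by convert ih hxz hw using 2; omega) (by convert hzxw using 2; omega)
    | zero => simp
    | add u v _ _ hu hv => rw [lie_add]; exact add_mem hu hv
    | smul c u _ hu => rw [lie_smul]; exact Submodule.smul_mem _ c hu

theorem lowerCentralSeries_quotient_lowerCentralSeries_eq_bot (n : ℕ) :
    lowerCentralSeries R (L ⧸ lowerCentralSeries R L L n)
      (L ⧸ lowerCentralSeries R L L n) n = ⊥ := by
  rw [← LieSubmodule.toSubmodule_eq_bot, ← coe_lowerCentralSeries_ideal_quot_eq,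
    LieSubmodule.toSubmodule_eq_bot,
    ← map_lowerCentralSeries_eq n (LieSubmodule.Quotient.surjective_mk' _),
    LieSubmodule.Quotient.map_mk'_eq_bot_le]

end LieModule

namespace AbrLie

variable {p N₀ : ℕ} {k : Type*} [Field k]

inductive IsMonLen (c₀ : ℕ) : Lq p N₀ k → ℕ → ℕ → Prop
  | gen (a : {a : ℕ // 0 < a ∧ Nat.Coprime a p}) (n : ZMod N₀) :
      IsMonLen c₀ (DD p N₀ k a n) (wtD c₀ a) 1
  | zero : IsMonLen c₀ (D0 p N₀ k) 1 1
  | brkt {x y : Lq p N₀ k} {w₁ w₂ ℓ₁ ℓ₂ : ℕ} :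
      IsMonLen c₀ x w₁ ℓ₁ → IsMonLen c₀ y w₂ ℓ₂ → IsMonLen c₀ ⁅x, y⁆ (w₁ + w₂) (ℓ₁ + ℓ₂)

theorem IsMon.exists_isMonLen {c₀ : ℕ} {x : Lq p N₀ k} {w : ℕ} (h : IsMon p N₀ k c₀ x w) :
    ∃ ℓ, IsMonLen c₀ x w ℓ := by
  induction h with
  | gen a n => exact ⟨1, .gen a n⟩
  | zero => exact ⟨1, .zero⟩
  | brkt _ _ ihx ihy =>
    obtain ⟨ℓ₁, h₁⟩ := ihx
    obtain ⟨ℓ₂, h₂⟩ := ihy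
    exact ⟨ℓ₁ + ℓ₂, h₁.brkt h₂⟩

namespace IsMonLen

variable {c₀ : ℕ} {x : Lq p N₀ k} {w ℓ : ℕ}

theorem one_le_length_and_length_le_weight (h : IsMonLen c₀ x w ℓ) : 1 ≤ ℓ ∧ ℓ ≤ w := by
  induction h with
  | gen a n => exact ⟨le_rfl, Nat.le_add_left 1 _⟩
  | zero => exact ⟨le_rfl, le_rfl⟩
  | brkt _ _ ihx ihy => omega

theorem mem_lowerCentralSeries (h : IsMonLen c₀ x w ℓ) :
    x ∈ LieModule.lowerCentralSeries k (Lq p N₀ k) (Lq p N₀ k) (ℓ - 1) := by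
  induction h with
  | gen a n => simp
  | zero => simp
  | @brkt x y w₁ w₂ ℓ₁ ℓ₂ hx hy ihx ihy =>
    have hℓ : ℓ₁ - 1 + (ℓ₂ - 1) + 1 = ℓ₁ + ℓ₂ - 1 := by
      have := hx.one_le_length_and_length_le_weight
      have := hy.one_le_length_and_length_le_weight
      omega
    exact hℓ ▸ LieModule.lie_mem_lowerCentralSeries ihx ihy

theorem eq_zero_of_le_length (h : IsMonLen c₀ x w ℓ) (hℓ : p ≤ ℓ) : x = 0 := by
  have hx := LieModule.antitone_lowerCentralSeries k (Lq p N₀ k) (Lq p N₀ k)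
    (by omega : p - 1 ≤ ℓ - 1) h.mem_lowerCentralSeries
  rwa [LieModule.lowerCentralSeries_quotient_lowerCentralSeries_eq_bot,
    LieSubmodule.mem_bot] at hx

end IsMonLen

noncomputable def monSpan (c₀ w ℓ : ℕ) : Submodule k (Lq p N₀ k) :=
  Submodule.span k {x | ∃ w' ℓ', w ≤ w' ∧ ℓ ≤ ℓ' ∧ IsMonLen c₀ x w' ℓ'}

theorem monSpan_mono {c₀ w w' ℓ ℓ' : ℕ} (hw : w' ≤ w) (hℓ : ℓ' ≤ ℓ) :
    (monSpan c₀ w ℓ : Submodule k (Lq p N₀ k)) ≤ monSpan c₀ w' ℓ' :=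
  Submodule.span_mono fun _ ⟨w'', ℓ'', hw'', hℓ'', hx⟩ =>
    ⟨w'', ℓ'', hw.trans hw'', hℓ.trans hℓ'', hx⟩

theorem IsMonLen.mem_monSpan {c₀ w ℓ w' ℓ' : ℕ} {x : Lq p N₀ k}
    (h : IsMonLen c₀ x w' ℓ') (hw : w ≤ w') (hℓ : ℓ ≤ ℓ') : x ∈ monSpan c₀ w ℓ :=
  Submodule.subset_span ⟨w', ℓ', hw, hℓ, h⟩

theorem lie_mem_monSpan {c₀ w₁ ℓ₁ w₂ ℓ₂ : ℕ} {x y : Lq p N₀ k}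
    (hx : x ∈ monSpan c₀ w₁ ℓ₁) (hy : y ∈ monSpan c₀ w₂ ℓ₂) :
    ⁅x, y⁆ ∈ monSpan c₀ (w₁ + w₂) (ℓ₁ + ℓ₂) := by
  induction hx using Submodule.span_induction with
  | mem x hx =>
    obtain ⟨w, ℓ, hw, hℓ, hxm⟩ := hx
    induction hy using Submodule.span_induction with
    | mem y hy =>
      obtain ⟨w', ℓ', hw', hℓ', hym⟩ := hy
      exact (hxm.brkt hym).mem_monSpan (by omega) (by omega)
    | zero => rw [lie_zero x]; exact zero_mem _
    | add u v _ _ hu hv => rw [lie_add x u v]; exact add_mem hu hv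
    | smul c u _ hu => rw [lie_smul c x u]; exact Submodule.smul_mem _ c hu
  | zero => rw [zero_lie y]; exact zero_mem _
  | add u v _ _ hu hv => rw [add_lie u v y]; exact add_mem hu hv
  | smul c u _ hu => rw [smul_lie c u y]; exact Submodule.smul_mem _ c hu

theorem lieFold_append_singleton {L : Type*} [LieRing L] {l : List L} (hl : l ≠ []) (y : L) :
    lieFold (l ++ [y]) = ⁅lieFold l, y⁆ := by
  obtain ⟨x, xs, rfl⟩ := List.exists_cons_of_ne_nil hl
  simp [lieFold, List.foldl_append]

theorem lieFold_ofFn_mem_monSpan {c₀ s : ℕ} (hs : 1 ≤ s) (g : Fin s → Lq p N₀ k)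
    (w : Fin s → ℕ) (hg : ∀ i, g i ∈ monSpan c₀ (w i) 1) :
    lieFold (List.ofFn g) ∈ monSpan c₀ (∑ i, w i) s := by
  induction s, hs using Nat.le_induction with
  | base => simpa [lieFold] using hg 0
  | succ s hs ih =>
    rw [List.ofFn_succ', List.concat_eq_append,
      lieFold_append_singleton (by simpa using Nat.pos_iff_ne_zero.1 hs), Fin.sum_univ_castSucc]
    exact lie_mem_monSpan (ih _ _ fun i => hg _) (hg _)

theorem wtD_le_sum (c₀ : ℕ) {s : ℕ} (hs : 1 ≤ s) (b : Fin s → ℕ) {a : ℕ} (ha : a ≤ ∑ i, b i) :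
    wtD c₀ a ≤ ∑ i, wtD c₀ (b i) := by
  have hadd (x y : ℕ) : wtD c₀ (x + y) ≤ wtD c₀ x + wtD c₀ y := by
    have := Nat.add_div_le_div_add_div_add_one x y c₀
    simp only [wtD]
    omega
  calc wtD c₀ a ≤ wtD c₀ (∑ i, b i) := Nat.add_le_add_right (Nat.div_le_div_right ha) 1
    _ ≤ ∑ i, wtD c₀ (b i) :=
      Finset.le_sum_nonempty_of_subadditive _ hadd ⟨⟨0, hs⟩, Finset.mem_univ _⟩ b

theorem Dfun_mem_monSpan (c₀ : ℕ) (α₀ : k) (a : ℕ) (n : ZMod N₀) :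
    Dfun p N₀ k α₀ a n ∈ monSpan c₀ (wtD c₀ a) 1 := by
  unfold Dfun
  split_ifs with h h0
  · exact (IsMonLen.gen ⟨a, h⟩ n).mem_monSpan le_rfl le_rfl
  · subst h0
    exact Submodule.smul_mem _ _ (IsMonLen.zero.mem_monSpan (by simp [wtD]) le_rfl)
  · exact zero_mem _

structure IsFrobeniusTwist (σ : Lq p N₀ k → Lq p N₀ k) : Prop where
  map_add : ∀ x y, σ (x + y) = σ x + σ y
  map_smul : ∀ (c : k) x, σ (c • x) = c ^ p • σ x
  map_lie : ∀ x y, σ ⁅x, y⁆ = ⁅σ x, σ y⁆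
  map_DD : ∀ a n, σ (DD p N₀ k a n) = DD p N₀ k a (n + 1)
  map_D0 : σ (D0 p N₀ k) = D0 p N₀ k

namespace IsFrobeniusTwist

variable {σ : Lq p N₀ k → Lq p N₀ k}

theorem map_zero (hσ : IsFrobeniusTwist σ) : σ 0 = 0 := by
  have h := hσ.map_add 0 0
  rw [add_zero] at h
  exact left_eq_add.1 h

theorem isMonLen (hσ : IsFrobeniusTwist σ) {c₀ w ℓ : ℕ} {x : Lq p N₀ k} (h : IsMonLen c₀ x w ℓ) :
    IsMonLen c₀ (σ x) w ℓ := by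
  induction h with
  | gen a n => rw [hσ.map_DD]; exact .gen a (n + 1)
  | zero => rw [hσ.map_D0]; exact .zero
  | brkt _ _ ihx ihy => rw [hσ.map_lie]; exact ihx.brkt ihy

theorem mem_monSpan (hσ : IsFrobeniusTwist σ) {c₀ w ℓ : ℕ} {x : Lq p N₀ k}
    (hx : x ∈ monSpan c₀ w ℓ) : σ x ∈ monSpan c₀ w ℓ := by
  induction hx using Submodule.span_induction with
  | mem x hx =>
    obtain ⟨w', ℓ', hw, hℓ, hxm⟩ := hx
    exact (hσ.isMonLen hxm).mem_monSpan hw hℓ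
  | zero => rw [hσ.map_zero]; exact zero_mem _
  | add u v _ _ hu hv => rw [hσ.map_add]; exact add_mem hu hv
  | smul c u _ hu => rw [hσ.map_smul]; exact Submodule.smul_mem _ _ hu

end IsFrobeniusTwist

theorem map_mem_ramIdeal {σ : Lq p N₀ k → Lq p N₀ k} {α₀ : k} {c₀ N : ℕ} {x : Lq p N₀ k}
    (hx : x ∈ ramIdeal p N₀ k σ α₀ c₀ N) : σ x ∈ ramIdeal p N₀ k σ α₀ c₀ N := by
  rw [ramIdeal, ← LieSubmodule.mem_coe, LieSubmodule.coe_sInf, Set.mem_iInter₂] at hx ⊢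
  exact fun I hI => hI.1 x (hx I hI)

theorem Fcal_mem_ramIdeal {σ : Lq p N₀ k → Lq p N₀ k} {α₀ : k} {c₀ N : ℕ} {γ : ℚ}
    (hγ : (c₀ : ℚ) ≤ γ) : Fcal p N₀ k α₀ γ N ∈ ramIdeal p N₀ k σ α₀ c₀ N := by
  rw [ramIdeal, ← LieSubmodule.mem_coe, LieSubmodule.coe_sInf, Set.mem_iInter₂]
  exact fun I hI => hI.2 γ hγ

noncomputable def fcalTerm (p N₀ : ℕ) (k : Type*) [Field k] (α₀ : k) (γ : ℚ) (N : ℕ)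
    (x : Σ s : ℕ, (Fin s → ℕ) × (Fin s → ℤ)) : Lq p N₀ k :=
  if hs : 1 ≤ x.1 ∧ x.1 < p then
    if (∀ i, p ∣ x.2.1 i → x.2.1 i = 0) ∧
        x.2.2 ⟨0, hs.1⟩ = 0 ∧
        (∀ i j : Fin x.1, i ≤ j → x.2.2 j ≤ x.2.2 i) ∧
        (∀ i, -(N : ℤ) ≤ x.2.2 i) ∧
        (∑ i, (x.2.1 i : ℚ) * (p : ℚ) ^ x.2.2 i) = γ then
      (((x.2.1 ⟨0, hs.1⟩ : ℕ) : k) * eta k x.2.2) •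
        lieFold (List.ofFn fun i => Dfun p N₀ k α₀ (x.2.1 i) ((x.2.2 i : ℤ) : ZMod N₀))
    else 0
  else 0

theorem Fcal_eq_finsum (α₀ : k) (γ : ℚ) (N : ℕ) :
    Fcal p N₀ k α₀ γ N = ∑ᶠ x, fcalTerm p N₀ k α₀ γ N x :=
  rfl

theorem fcalTerm_mem_of_forall {P : Submodule k (Lq p N₀ k)} {α₀ : k} {γ : ℚ} {N s : ℕ}
    {a : Fin s → ℕ} {n : Fin s → ℤ}
    (hP : ∀ hs : 1 ≤ s ∧ s < p, (∀ i, p ∣ a i → a i = 0) → n ⟨0, hs.1⟩ = 0 → Antitone n →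
      (∀ i, -(N : ℤ) ≤ n i) → (∑ i, (a i : ℚ) * (p : ℚ) ^ n i) = γ →
      (((a ⟨0, hs.1⟩ : ℕ) : k) * eta k n) •
        lieFold (List.ofFn fun i => Dfun p N₀ k α₀ (a i) ((n i : ℤ) : ZMod N₀)) ∈ P) :
    fcalTerm p N₀ k α₀ γ N ⟨s, a, n⟩ ∈ P := by
  unfold fcalTerm
  split_ifs with hs h
  · exact hP hs h.1 h.2.1 h.2.2.1 h.2.2.2.1 h.2.2.2.2
  · exact zero_mem _
  · exact zero_mem _

theorem le_zero_of_antitone {s : ℕ} {n : Fin s → ℤ} (hn : Antitone n) (hs : 1 ≤ s)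
    (h0 : n ⟨0, hs⟩ = 0) (i : Fin s) : n i ≤ 0 :=
  h0 ▸ hn (Fin.mk_le_mk.2 (Nat.zero_le i))

theorem natCast_le_mul_pow_of_mul_zpow_le {p a N : ℕ} (hp : 1 ≤ p) {n : ℤ} {γ : ℚ}
    (hn : -(N : ℤ) ≤ n) (h : (a : ℚ) * (p : ℚ) ^ n ≤ γ) : (a : ℚ) ≤ γ * (p : ℚ) ^ N := by
  have hp0 : (0 : ℚ) < p := by exact_mod_cast hp
  have hγ : 0 ≤ γ := le_trans (by positivity) h
  calc (a : ℚ) = (a : ℚ) * (p : ℚ) ^ n * (p : ℚ) ^ (-n) := by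
        rw [mul_assoc, ← zpow_add₀ hp0.ne', add_neg_cancel, zpow_zero, mul_one]
    _ ≤ γ * (p : ℚ) ^ (-n) := mul_le_mul_of_nonneg_right h (by positivity)
    _ ≤ γ * (p : ℚ) ^ (N : ℤ) :=
        mul_le_mul_of_nonneg_left (zpow_le_zpow_right₀ (by exact_mod_cast hp) (by omega)) hγ
    _ = γ * (p : ℚ) ^ N := by rw [zpow_natCast]

theorem mul_zpow_le_of_sum_eq {p s : ℕ} {a : Fin s → ℕ} {n : Fin s → ℤ} {γ : ℚ}
    (h : ∑ i, (a i : ℚ) * (p : ℚ) ^ n i = γ) (i : Fin s) : (a i : ℚ) * (p : ℚ) ^ n i ≤ γ :=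
  h ▸ Finset.single_le_sum (f := fun j => (a j : ℚ) * (p : ℚ) ^ n j) (fun j _ => by positivity)
    (Finset.mem_univ i)

theorem fcalTerm_support_finite [Fact p.Prime] (α₀ : k) (γ : ℚ) (N : ℕ) :
    (Function.support (fcalTerm p N₀ k α₀ γ N)).Finite := by
  have hp : 1 ≤ p := (Fact.out : p.Prime).one_lt.le
  let B := ⌈γ * (p : ℚ) ^ N⌉₊
  let box : Finset (Σ s : ℕ, (Fin s → ℕ) × (Fin s → ℤ)) :=
    (Finset.range p).sigma fun s =>
      Fintype.piFinset (fun _ => Finset.range (B + 1)) ×ˢ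
        Fintype.piFinset (fun _ => Finset.Icc (-(N : ℤ)) 0)
  refine box.finite_toSet.subset fun ⟨s, a, n⟩ hx => by_contra fun hbox => hx ?_
  rw [← Submodule.mem_bot k]
  refine fcalTerm_mem_of_forall fun hs _ hn0 hanti hN hsum => absurd ?_ hbox
  simp only [box, Finset.coe_sigma, Set.mem_sigma_iff, Finset.coe_range, Set.mem_Iio,
    Finset.coe_product, Set.mem_prod, Fintype.coe_piFinset, Set.mem_pi, Set.mem_univ,
    Finset.coe_Icc, Set.mem_Icc, forall_const]
  refine ⟨hs.2, fun i => Nat.lt_succ_of_le (Nat.cast_le (α := ℚ) |>.1 ?_), fun i =>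
    ⟨hN i, le_zero_of_antitone hanti hs.1 hn0 i⟩⟩
  exact (natCast_le_mul_pow_of_mul_zpow_le hp (hN i) (mul_zpow_le_of_sum_eq hsum i)).trans
    (Nat.le_ceil _)

theorem eta_fin_one (n : Fin 1 → ℤ) : eta k n = 1 := by
  simp [eta, Subsingleton.elim _ (0 : Fin 1)]

theorem fcalTerm_single [Fact p.Prime] (α₀ : k) (N : ℕ) {a : ℕ} (ha : 0 < a)
    (hap : a.Coprime p) :
    fcalTerm p N₀ k α₀ a N ⟨1, fun _ => a, fun _ => 0⟩ = (a : k) • DD p N₀ k ⟨a, ha, hap⟩ 0 := by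
  have hpa : ¬ p ∣ a := (Nat.Prime.coprime_iff_not_dvd Fact.out).1 hap.symm
  have h1p : 1 < p := (Fact.out : p.Prime).one_lt
  simp [fcalTerm, h1p, hpa, eta_fin_one, lieFold, Dfun, ha]
  exact dif_pos hap

theorem fcalTerm_mem_monSpan (c₀ : ℕ) (α₀ : k) (N a : ℕ)
    {x : Σ s : ℕ, (Fin s → ℕ) × (Fin s → ℤ)} (hx : x ≠ ⟨1, fun _ => a, fun _ => 0⟩) :
    fcalTerm p N₀ k α₀ a N x ∈ monSpan c₀ (wtD c₀ a) 2 := by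
  obtain ⟨s, b, n⟩ := x
  refine fcalTerm_mem_of_forall fun hs _ hn0 hanti _ hsum => Submodule.smul_mem _ _ ?_
  have hn : ∀ i, n i ≤ 0 := le_zero_of_antitone hanti hs.1 hn0
  have hab : a ≤ ∑ i, b i := by
    have hp : (1 : ℚ) ≤ p := by exact_mod_cast hs.1.trans hs.2.le
    have : (a : ℚ) ≤ ∑ i, (b i : ℚ) := hsum ▸ Finset.sum_le_sum fun i _ =>
      mul_le_of_le_one_right (by positivity) (zpow_le_one_of_nonpos₀ hp (hn i))
    exact_mod_cast this
  have hs2 : 2 ≤ s := by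
    by_contra hs2
    obtain rfl : s = 1 := by omega
    have hn' : n = fun _ => 0 := funext fun i => Subsingleton.elim i ⟨0, hs.1⟩ ▸ hn0
    subst hn'
    have hb : b = fun _ => a := funext fun i => by
      rw [Subsingleton.elim i ⟨0, hs.1⟩]
      simpa using hsum
    exact hx (hb ▸ rfl)
  exact monSpan_mono (wtD_le_sum c₀ hs.1 b hab) hs2
    (lieFold_ofFn_mem_monSpan hs.1 _ _ fun i => Dfun_mem_monSpan c₀ α₀ (b i) _)

theorem Fcal_sub_smul_mem_monSpan [Fact p.Prime] (c₀ : ℕ) (α₀ : k) (N : ℕ) {a : ℕ} (ha : 0 < a)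
    (hap : a.Coprime p) :
    Fcal p N₀ k α₀ a N - (a : k) • DD p N₀ k ⟨a, ha, hap⟩ 0 ∈ monSpan c₀ (wtD c₀ a) 2 := by
  classical
  set x₀ : Σ s : ℕ, (Fin s → ℕ) × (Fin s → ℤ) := ⟨1, fun _ => a, fun _ => 0⟩
  set lead : _ → Lq p N₀ k := Pi.single x₀ ((a : k) • DD p N₀ k ⟨a, ha, hap⟩ 0)
  have hlead : (Function.support lead).Finite :=
    (Set.finite_singleton x₀).subset Pi.support_single_subset
  have lead_x₀ : lead x₀ = (a : k) • DD p N₀ k ⟨a, ha, hap⟩ 0 := Pi.single_eq_same _ _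
  have lead_ne : ∀ x ≠ x₀, lead x = 0 := fun x hx => Pi.single_eq_of_ne hx _
  have hsplit : Fcal p N₀ k α₀ a N - (a : k) • DD p N₀ k ⟨a, ha, hap⟩ 0 =
      ∑ᶠ x, (fcalTerm p N₀ k α₀ a N x - lead x) := by
    rw [Fcal_eq_finsum, finsum_sub_distrib (fcalTerm_support_finite α₀ a N) hlead,
      finsum_eq_single lead x₀ lead_ne, lead_x₀]
  rw [hsplit]
  refine finsum_induction _ (zero_mem _) (fun _ _ => add_mem) fun x => ?_
  by_cases hx : x = x₀
  · rw [hx, lead_x₀, fcalTerm_single α₀ N ha hap, sub_self]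
    exact zero_mem _
  · rw [lead_ne x hx, sub_zero]
    exact fcalTerm_mem_monSpan c₀ α₀ N a hx

theorem natCast_pow_char [Fact p.Prime] [CharP k p] (a : ℕ) : (a : k) ^ p = a := by
  have : ExpChar k p := ExpChar.prime Fact.out
  rw [← frobenius_def, map_natCast]

theorem DD_mem_ramIdeal_sup_monSpan [Fact p.Prime] [CharP k p] [NeZero N₀]
    {σ : Lq p N₀ k → Lq p N₀ k} (hσ : IsFrobeniusTwist σ) (α₀ : k) {c₀ : ℕ} (N : ℕ)
    {a : ℕ} (ha : 0 < a) (hap : a.Coprime p) (hca : c₀ ≤ a) (n : ZMod N₀) :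
    DD p N₀ k ⟨a, ha, hap⟩ n ∈
      (ramIdeal p N₀ k σ α₀ c₀ N : Submodule k (Lq p N₀ k)) ⊔ monSpan c₀ (wtD c₀ a) 2 := by
  set J := (ramIdeal p N₀ k σ α₀ c₀ N : Submodule k (Lq p N₀ k)) ⊔ monSpan c₀ (wtD c₀ a) 2
  have hJ : ∀ x ∈ J, σ x ∈ J := fun x hx => by
    obtain ⟨u, hu, v, hv, rfl⟩ := Submodule.mem_sup.1 hx
    rw [hσ.map_add]
    exact add_mem (Submodule.mem_sup_left (map_mem_ramIdeal hu))
      (Submodule.mem_sup_right (hσ.mem_monSpan hv))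
  have h0 : (a : k) • DD p N₀ k ⟨a, ha, hap⟩ 0 ∈ J := by
    rw [← sub_sub_cancel (Fcal p N₀ k α₀ a N) ((a : k) • DD p N₀ k ⟨a, ha, hap⟩ 0)]
    exact sub_mem (Submodule.mem_sup_left (Fcal_mem_ramIdeal (by exact_mod_cast hca)))
      (Submodule.mem_sup_right (Fcal_sub_smul_mem_monSpan c₀ α₀ N ha hap))
  have hm : ∀ m : ℕ, (a : k) • DD p N₀ k ⟨a, ha, hap⟩ m ∈ J := by
    intro m
    induction m with
    | zero => simpa using h0
    | succ m ih =>
      have := hJ _ ih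
      rwa [hσ.map_smul, hσ.map_DD, natCast_pow_char, ← Nat.cast_succ] at this
  have hne : (a : k) ≠ 0 := fun h =>
    (Nat.Prime.coprime_iff_not_dvd Fact.out).1 hap.symm ((CharP.cast_eq_zero_iff k p a).1 h)
  simpa [Submodule.smul_mem_iff _ hne] using hm n.val

theorem lie_mem_sup_monSpan {I : LieIdeal k (Lq p N₀ k)} {c₀ w₁ ℓ₁ w₂ ℓ₂ : ℕ} {x y : Lq p N₀ k}
    (hx : x ∈ (I : Submodule k (Lq p N₀ k)) ⊔ monSpan c₀ w₁ ℓ₁) (hy : y ∈ monSpan c₀ w₂ ℓ₂) :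
    ⁅x, y⁆ ∈ (I : Submodule k (Lq p N₀ k)) ⊔ monSpan c₀ (w₁ + w₂) (ℓ₁ + ℓ₂) := by
  obtain ⟨u, hu, v, hv, rfl⟩ := Submodule.mem_sup.1 hx
  rw [add_lie u v y]
  exact add_mem (Submodule.mem_sup_left (lie_mem_left k _ I u y hu))
    (Submodule.mem_sup_right (lie_mem_monSpan hv hy))

theorem lie_mem_sup_monSpan' {I : LieIdeal k (Lq p N₀ k)} {c₀ w₁ ℓ₁ w₂ ℓ₂ : ℕ} {x y : Lq p N₀ k}
    (hx : x ∈ monSpan c₀ w₁ ℓ₁) (hy : y ∈ (I : Submodule k (Lq p N₀ k)) ⊔ monSpan c₀ w₂ ℓ₂) :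
    ⁅x, y⁆ ∈ (I : Submodule k (Lq p N₀ k)) ⊔ monSpan c₀ (w₁ + w₂) (ℓ₁ + ℓ₂) := by
  rw [← lie_skew x y, add_comm w₁, add_comm ℓ₁]
  exact neg_mem (lie_mem_sup_monSpan hy hx)

theorem IsMonLen.mem_ramIdeal_sup_monSpan [Fact p.Prime] [CharP k p] [NeZero N₀]
    {σ : Lq p N₀ k → Lq p N₀ k} (hσ : IsFrobeniusTwist σ) (α₀ : k) {c₀ : ℕ} (N : ℕ)
    {x : Lq p N₀ k} {w ℓ : ℕ} (h : IsMonLen c₀ x w ℓ) (hℓw : ℓ < w) :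
    x ∈ (ramIdeal p N₀ k σ α₀ c₀ N : Submodule k (Lq p N₀ k)) ⊔ monSpan c₀ w (ℓ + 1) := by
  induction h with
  | gen a n =>
    have hca : c₀ ≤ a := (Nat.div_pos_iff.1 (by simpa [wtD] using hℓw)).2
    exact DD_mem_ramIdeal_sup_monSpan hσ α₀ N a.2.1 a.2.2 hca n
  | zero => omega
  | @brkt x y w₁ w₂ ℓ₁ ℓ₂ hx hy ihx ihy =>
    rcases lt_or_ge ℓ₁ w₁ with h₁ | h₁
    · simpa [add_right_comm ℓ₁] using lie_mem_sup_monSpan (ihx h₁) (hy.mem_monSpan le_rfl le_rfl)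
    · have h₂ : ℓ₂ < w₂ := by have := hx.one_le_length_and_length_le_weight; omega
      simpa [add_assoc] using lie_mem_sup_monSpan' (hx.mem_monSpan le_rfl le_rfl) (ihy h₂)

theorem monSpan_eq_bot {c₀ w ℓ : ℕ} (hℓ : p ≤ ℓ) :
    (monSpan c₀ w ℓ : Submodule k (Lq p N₀ k)) = ⊥ :=
  (Submodule.span_eq_bot).2 fun _ ⟨_, _, _, hℓ', hx⟩ => hx.eq_zero_of_le_length (hℓ.trans hℓ')

theorem monSpan_le_ramIdeal [Fact p.Prime] [CharP k p] [NeZero N₀]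
    {σ : Lq p N₀ k → Lq p N₀ k} (hσ : IsFrobeniusTwist σ) (α₀ : k) {c₀ : ℕ} (N : ℕ)
    {w : ℕ} (hw : p ≤ w) (ℓ : ℕ) :
    monSpan c₀ w ℓ ≤ (ramIdeal p N₀ k σ α₀ c₀ N : Submodule k (Lq p N₀ k)) := by
  induction h : p - ℓ generalizing ℓ with
  | zero => rw [monSpan_eq_bot (by omega)]; exact bot_le
  | succ d ih =>
    rw [monSpan, Submodule.span_le]
    rintro x ⟨w', ℓ', hw', hℓ', hx⟩
    rcases le_or_gt p ℓ' with hpℓ | hℓp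
    · rw [hx.eq_zero_of_le_length hpℓ]
      exact zero_mem _
    · have hmem := hx.mem_ramIdeal_sup_monSpan hσ α₀ N (by omega)
      exact sup_le le_rfl ((monSpan_mono hw' (by omega)).trans (ih (ℓ + 1) (by omega))) hmem

theorem Lk_le_ramIdeal [Fact p.Prime] [CharP k p] [NeZero N₀]
    {σ : Lq p N₀ k → Lq p N₀ k} (hσ : IsFrobeniusTwist σ) (α₀ : k) (c₀ N : ℕ) :
    Lk p N₀ k c₀ p ≤ (ramIdeal p N₀ k σ α₀ c₀ N : Submodule k (Lq p N₀ k)) := by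
  refine (Submodule.span_le.2 ?_).trans (monSpan_le_ramIdeal hσ α₀ N le_rfl 1)
  rintro x ⟨w, hw, hx⟩
  obtain ⟨ℓ, hxℓ⟩ := hx.exists_isMonLen
  exact hxℓ.mem_monSpan hw hxℓ.one_le_length_and_length_le_weight.1

theorem stmt_10_general (p N₀ : ℕ) [Fact p.Prime] (hN₀ : 0 < N₀)
    (k : Type*) [Field k] [Algebra (ZMod p) k]
    (α₀ : k)
    (σ : Lq p N₀ k → Lq p N₀ k)
    (hσadd : ∀ x y : Lq p N₀ k, σ (x + y) = σ x + σ y)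
    (hσsmul : ∀ (c : k) (x : Lq p N₀ k), σ (c • x) = c ^ p • σ x)
    (hσbrkt : ∀ x y : Lq p N₀ k, σ ⁅x, y⁆ = ⁅σ x, σ y⁆)
    (hσD : ∀ a n, σ (DD p N₀ k a n) = DD p N₀ k a (n + 1))
    (hσ0 : σ (D0 p N₀ k) = D0 p N₀ k)
    (c₀ : ℕ) :
    ∃ N₁ : ℕ, ∀ N : ℕ, N₁ ≤ N →
      ∀ x : Lq p N₀ k, x ∈ Lk p N₀ k c₀ p → x ∈ ramIdeal p N₀ k σ α₀ c₀ N := by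
  have : CharP k p := charP_of_injective_algebraMap (algebraMap (ZMod p) k).injective p
  have : NeZero N₀ := ⟨hN₀.ne'⟩
  have hσ : IsFrobeniusTwist σ := ⟨hσadd, hσsmul, hσbrkt, hσD, hσ0⟩
  exact ⟨0, fun N _ x hx => Lk_le_ramIdeal hσ α₀ c₀ N hx⟩

/-- **Proposition 4.3** (`𝓛(p) ⊆ 𝓛^{(c₀)}`).  There is `N₁` such that for all `N ≥ N₁` the
weight-`p` part `L_k(p)` of the filtration is contained in the ideal `I_N(c₀)` generated by
the elements `ℱ⁰_{γ,−N}` with `γ ≥ c₀`. -/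
theorem stmt_10 (p N₀ : ℕ) [Fact p.Prime] (hp : 2 < p) (hN₀ : 0 < N₀)
    (k : Type*) [Field k] [Fintype k] [Algebra (ZMod p) k]
    (hcard : Fintype.card k = p ^ N₀)
    (α₀ : k) (htr : Algebra.trace (ZMod p) k α₀ = 1)
    (σ : Lq p N₀ k → Lq p N₀ k)
    (hσadd : ∀ x y : Lq p N₀ k, σ (x + y) = σ x + σ y)
    (hσsmul : ∀ (c : k) (x : Lq p N₀ k), σ (c • x) = c ^ p • σ x)
    (hσbrkt : ∀ x y : Lq p N₀ k, σ ⁅x, y⁆ = ⁅σ x, σ y⁆)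
    (hσD : ∀ a n, σ (DD p N₀ k a n) = DD p N₀ k a (n + 1))
    (hσ0 : σ (D0 p N₀ k) = D0 p N₀ k)
    (c₀ : ℕ) (hc₀ : 0 < c₀) (hpc₀ : p ∣ c₀) :
    ∃ N₁ : ℕ, ∀ N : ℕ, N₁ ≤ N →
      ∀ x : Lq p N₀ k, x ∈ Lk p N₀ k c₀ p → x ∈ ramIdeal p N₀ k σ α₀ c₀ N :=
  stmt_10_general p N₀ hN₀ k α₀ σ hσadd hσsmul hσbrkt hσD hσ0 c₀

end AbrLie
end

section
/- Let L be a Lie algebra over 𝔽_p whose lower central series satisfies C_p(L) = 0. Suppose l_h ∈ C₂(L) with l_h ∉ C₃(L), and l_K ∈ L satisfies l_K − l_h ∈ C₃(L) and l_K ∈ ⟨l_h⟩, the Lie ideal of L generated by l_h. Then ⟨l_K⟩ = ⟨l_h⟩; that is, l_K generates the ideal generated by l_h. (Lemma 6.5.) -/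
def Baux (p : ℕ) (L : Type*) [LieRing L] [LieAlgebra (ZMod p) L] (lh : L) :
    ℕ → LieIdeal (ZMod p) L
  | 0 => ⁅(⊤ : LieIdeal (ZMod p) L), LieSubmodule.lieSpan (ZMod p) L ({lh} : Set L)⁆
  | (k+1) => ⁅(⊤ : LieIdeal (ZMod p) L), Baux p L lh k⁆

/-- **Lemma 6.5.** Let `L` be a Lie algebra over `𝔽_p` with `C_p(L) = 0`. If
`l_h ∈ C₂(L) \ C₃(L)` and `l_K ≡ l_h mod C₃(L)` with `l_K` in the ideal generated by `l_h`,
then `l_K` generates the ideal generated by `l_h`. -/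
theorem stmt_12 (p : ℕ) [Fact p.Prime]
    (L : Type*) [LieRing L] [LieAlgebra (ZMod p) L]
    (hnil : LieModule.lowerCentralSeries (ZMod p) L L (p - 1) = ⊥)
    (lh lK : L)
    (hlh2 : lh ∈ LieModule.lowerCentralSeries (ZMod p) L L 1)
    (hlh3 : lh ∉ LieModule.lowerCentralSeries (ZMod p) L L 2)
    (hK3 : lK - lh ∈ LieModule.lowerCentralSeries (ZMod p) L L 2)
    (hKmem : lK ∈ LieSubmodule.lieSpan (ZMod p) L ({lh} : Set L)) :
    LieSubmodule.lieSpan (ZMod p) L ({lK} : Set L) =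
      LieSubmodule.lieSpan (ZMod p) L ({lh} : Set L) := by
  set I := LieSubmodule.lieSpan (ZMod p) L ({lh} : Set L) with hI
  set J := LieSubmodule.lieSpan (ZMod p) L ({lK} : Set L) with hJ
  set C := LieModule.lowerCentralSeries (ZMod p) L L with hC
  set B := Baux p L lh with hBdef
  have hB0 : B 0 = ⁅(⊤ : LieIdeal (ZMod p) L), I⁆ := rfl
  have hBs : ∀ k, B (k+1) = ⁅(⊤ : LieIdeal (ZMod p) L), B k⁆ := fun k => rfl
  have hJI : J ≤ I := LieSubmodule.lieSpan_le.2 (Set.singleton_subset_iff.2 hKmem)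
  have hlhI : lh ∈ I := LieSubmodule.subset_lieSpan (Set.mem_singleton lh)
  have hIC : I ≤ C 1 := LieSubmodule.lieSpan_le.2 (Set.singleton_subset_iff.2 hlh2)
  -- B k ≤ C (k+2)
  have hBC : ∀ k, B k ≤ C (k + 2) := by
    intro k
    induction k with
    | zero =>
      rw [hB0]
      calc ⁅(⊤ : LieIdeal (ZMod p) L), I⁆ ≤ ⁅(⊤ : LieIdeal (ZMod p) L), C 1⁆ :=
            LieSubmodule.mono_lie_right _ hIC
        _ = C 2 := (LieModule.lowerCentralSeries_succ (ZMod p) L L 1).symm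
    | succ k ih =>
      rw [hBs]
      calc ⁅(⊤ : LieIdeal (ZMod p) L), B k⁆ ≤ ⁅(⊤ : LieIdeal (ZMod p) L), C (k+2)⁆ :=
            LieSubmodule.mono_lie_right _ ih
        _ = C (k+3) := (LieModule.lowerCentralSeries_succ (ZMod p) L L (k+2)).symm
  have hB0I : B 0 ≤ I := by rw [hB0]; exact LieSubmodule.lie_le_right _ _
  -- decomposition submodule
  let S : LieSubmodule (ZMod p) L L :=
    { toSubmodule := Submodule.span (ZMod p) ({lh} : Set L) ⊔ (B 0 : Submodule (ZMod p) L)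
      lie_mem := by
        intro x m hm
        rcases Submodule.mem_sup.1 hm with ⟨y, hy, z, hz, rfl⟩
        rcases Submodule.mem_span_singleton.1 hy with ⟨a, rfl⟩
        have h1 : ⁅x, a • lh⁆ ∈ B 0 := by
          rw [lie_smul]
          exact (B 0).smul_mem a
            (LieSubmodule.lie_mem_lie (LieSubmodule.mem_top x) hlhI)
        have h2 : ⁅x, z⁆ ∈ B 0 :=
          LieSubmodule.lie_mem_lie (LieSubmodule.mem_top x) (hB0I hz)
        rw [lie_add]
        exact Submodule.mem_sup_right (add_mem h1 h2) }
    -- lh ∈ S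
  have hlhS : lh ∈ S :=
    Submodule.mem_sup_left (Submodule.mem_span_singleton_self lh)
  have hIS : I ≤ S := LieSubmodule.lieSpan_le.2 (Set.singleton_subset_iff.2 hlhS)
  have hKS : lK ∈ S := hIS hKmem
  rcases Submodule.mem_sup.1 hKS with ⟨y, hy, z, hz, hyz⟩
  rcases Submodule.mem_span_singleton.1 hy with ⟨a, rfl⟩
  -- a = 1
  have hzC : z ∈ C 2 := hBC 0 hz
  have ha1 : (a - 1) • lh ∈ C 2 := by
    have : (a - 1) • lh = (lK - lh) - z := by
      rw [← hyz]; rw [sub_smul, one_smul]; abel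
    rw [this]
    exact sub_mem hK3 hzC
  have ha : a = 1 := by
    by_contra hne
    apply hlh3
    have hinv : lh = (a - 1)⁻¹ • ((a - 1) • lh) := by
      rw [smul_smul, inv_mul_cancel₀ (sub_ne_zero.2 hne), one_smul]
    rw [hinv]
    exact (C 2).smul_mem _ ha1
  have hzB : lK - lh ∈ B 0 := by
    have : lK - lh = z := by rw [← hyz, ha, one_smul]; abel
    rw [this]; exact hz
  -- main induction
  have hmain : ∀ k, I ≤ J ⊔ B k := by
    intro k
    induction k with
    | zero =>
      apply LieSubmodule.lieSpan_le.2
      rw [Set.singleton_subset_iff]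
      have : lh = lK - (lK - lh) := by abel
      rw [this]
      exact sub_mem ((le_sup_left : J ≤ J ⊔ B 0)
          (LieSubmodule.subset_lieSpan (Set.mem_singleton lK)))
        ((le_sup_right : B 0 ≤ J ⊔ B 0) hzB)
    | succ k ih =>
      have hstep : B 0 ≤ J ⊔ B (k+1) := by
        rw [hB0]
        calc ⁅(⊤ : LieIdeal (ZMod p) L), I⁆ ≤ ⁅(⊤ : LieIdeal (ZMod p) L), J ⊔ B k⁆ :=
              LieSubmodule.mono_lie_right _ ih
          _ = ⁅(⊤ : LieIdeal (ZMod p) L), J⁆ ⊔ ⁅(⊤ : LieIdeal (ZMod p) L), B k⁆ :=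
              LieSubmodule.lie_sup _ _ _
          _ ≤ J ⊔ B (k+1) := by
              rw [hBs]
              exact sup_le_sup (LieSubmodule.lie_le_right _ _) le_rfl
      apply LieSubmodule.lieSpan_le.2
      rw [Set.singleton_subset_iff]
      have : lh = lK - (lK - lh) := by abel
      rw [this]
      exact sub_mem ((le_sup_left : J ≤ J ⊔ B (k+1))
          (LieSubmodule.subset_lieSpan (Set.mem_singleton lK)))
        (hstep hzB)
  have hIJ : I ≤ J := by
    have h1 : B p ≤ ⊥ := by
      calc B p ≤ C (p + 2) := hBC p
        _ ≤ C (p - 1) := LieModule.antitone_lowerCentralSeries (ZMod p) L L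
              (by omega)
        _ = ⊥ := hnil
    calc I ≤ J ⊔ B p := hmain p
      _ ≤ J ⊔ ⊥ := sup_le_sup le_rfl h1
      _ = J := sup_bot_eq J
  exact le_antisymm hJI hIJ
end
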